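/- arXiv:1310.2447 — 5 statements merged into one kernel-verified Lean document; each statement's English description precedes it below -/
import Mathlib

section
/- Let I be an open interval of ℝ, let t ≥ 2, and let f₁, …, f_t : I → ℝ be real analytic functions which are linearly independent over ℝ on I. For 1 ≤ i ≤ t, let W_i : I → ℝ denote the Wronskian of f₁, …, f_i. Assume that each W_j (1 ≤ j ≤ t) has finitely many zeros in I. Then f₁ + ⋯ + f_t has finitely many zeros in I and Z(f₁ + ⋯ + f_t) ≤ t − 1 + Z(W_t) + Z(W_{t−1}) + 2·∑_{j=1}^{t−2} Z(W_j), where Z(g) denotes the number of distinct zeros of g in I. -/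
/-!
Put `F = f₀ + ⋯ + f_{t-1}` and `V_k = W(f₀, …, f_{k-1}, F)`, so that `V₀ = F` and, after a column
operation, `V_{t-1} = W_t`. The Desnanot–Jacobi identity for the Wronskian matrix of
`(f₀, …, f_k, F)` reads `W_{k+1} V_k' - W_{k+1}' V_k = V_{k+1} W_k`. Between two zeros of `V_k`,
either `W_{k+1}` vanishes or, by Rolle's theorem for `V_k / W_{k+1}`, the left-hand side does; hence
`Z(V_k) ≤ 1 + Z(W_{k+1}) + Z(W_k) + Z(V_{k+1})`, and summing over `k < t - 1` gives the bound.
-/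

open Set Matrix
open scoped ContDiff

namespace Matrix

variable {m R : Type*} [Fintype m] [DecidableEq m] [CommRing R]

def borderMinor (M : Matrix (m ⊕ Fin 2) (m ⊕ Fin 2) R) (a b : Fin 2) :
    Matrix (m ⊕ Fin 1) (m ⊕ Fin 1) R :=
  M.submatrix (Sum.map id fun _ => a) (Sum.map id fun _ => b)

theorem det_borderMinor_of_invertible (M : Matrix (m ⊕ Fin 2) (m ⊕ Fin 2) R)
    [Invertible M.toBlocks₁₁] (a b : Fin 2) :
    (M.borderMinor a b).det =
      M.toBlocks₁₁.det * (M.toBlocks₂₂ - M.toBlocks₂₁ * ⅟M.toBlocks₁₁ * M.toBlocks₁₂) a b := by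
  let : Invertible (M.borderMinor a b).toBlocks₁₁ := ‹Invertible M.toBlocks₁₁›
  rw [← fromBlocks_toBlocks (M.borderMinor a b), det_fromBlocks₁₁, det_fin_one]
  rfl

theorem det_mul_det_toBlocks₁₁_of_invertible (M : Matrix (m ⊕ Fin 2) (m ⊕ Fin 2) R)
    [Invertible M.toBlocks₁₁] :
    M.det * M.toBlocks₁₁.det =
      (M.borderMinor 0 0).det * (M.borderMinor 1 1).det -
        (M.borderMinor 0 1).det * (M.borderMinor 1 0).det := by
  have hM := det_fromBlocks₁₁ M.toBlocks₁₁ M.toBlocks₁₂ M.toBlocks₂₁ M.toBlocks₂₂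
  rw [fromBlocks_toBlocks, det_fin_two] at hM
  simp only [hM, det_borderMinor_of_invertible]
  ring

open Polynomial in
theorem det_mul_det_toBlocks₁₁ [IsDomain R] (M : Matrix (m ⊕ Fin 2) (m ⊕ Fin 2) R) :
    M.det * M.toBlocks₁₁.det =
      (M.borderMinor 0 0).det * (M.borderMinor 1 1).det -
        (M.borderMinor 0 1).det * (M.borderMinor 1 0).det := by
  -- The perturbed core `toBlocks₁₁ + X • 1` has a monic determinant, so it is invertible over
  -- `FractionRing R[X]`; the identity found there specializes to `M` at `X = 0`.
  let P : Matrix (m ⊕ Fin 2) (m ⊕ Fin 2) R[X] := M.map C + (X : R[X]) • fromBlocks 1 0 0 0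
  have hP : P.map (evalRingHom 0) = M := by
    ext (i | i) (j | j) <;> simp [P, one_apply, apply_ite]
  have hcore : P.toBlocks₁₁.det = (-M.toBlocks₁₁).charpoly := by
    rw [charpoly]
    congr 1
    ext i j
    by_cases hij : i = j
    · subst hij; simp [P, toBlocks₁₁, charmatrix_apply_eq]; ring
    · simp [P, toBlocks₁₁, one_apply, hij]
  let φ := algebraMap R[X] (FractionRing R[X])
  have hφ : Function.Injective φ := IsFractionRing.injective _ _
  let : Invertible (P.map φ).toBlocks₁₁ := by
    refine invertibleOfIsUnitDet _ (isUnit_iff_ne_zero.2 ?_)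
    rw [show (P.map φ).toBlocks₁₁.det = φ P.toBlocks₁₁.det from (φ.map_det _).symm, hcore]
    exact (map_ne_zero_iff φ hφ).2 (charpoly_monic _).ne_zero
  have hRX : P.det * P.toBlocks₁₁.det =
      (P.borderMinor 0 0).det * (P.borderMinor 1 1).det -
        (P.borderMinor 0 1).det * (P.borderMinor 1 0).det := by
    apply hφ
    simp only [map_sub, map_mul, RingHom.map_det]
    exact det_mul_det_toBlocks₁₁_of_invertible (P.map φ)
  have h0 := congrArg (evalRingHom 0) hRX
  simp only [map_sub, map_mul, RingHom.map_det] at h0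
  rw [← hP]
  exact h0

end Matrix

theorem hasDerivAt_det {𝕜 ι : Type*} [NontriviallyNormedField 𝕜] [Fintype ι] [DecidableEq ι]
    {A : 𝕜 → Matrix ι ι 𝕜} {A' : Matrix ι ι 𝕜} {x : 𝕜}
    (hA : ∀ i j, HasDerivAt (fun y => A y i j) (A' i j) x) :
    HasDerivAt (fun y => (A y).det) (∑ i, ((A x).updateRow i (A' i)).det) x := by
  let D : ContinuousMultilinearMap 𝕜 (fun _ : ι => ι → 𝕜) 𝕜 :=
    ⟨(detRowAlternating : (ι → 𝕜) [⋀^ι]→ₗ[𝕜] 𝕜).toMultilinearMap, continuous_id.matrix_det⟩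
  have hA' : HasDerivAt (fun y => (A y : ι → ι → 𝕜)) A' x :=
    hasDerivAt_pi.2 fun i => hasDerivAt_pi.2 (hA i)
  exact ((D.hasFDerivAt (A x)).comp_hasDerivAt x hA').congr_deriv (D.linearDeriv_apply _ _)

theorem hasDerivAt_iteratedDerivWithin {𝕜 E : Type*} [NontriviallyNormedField 𝕜]
    [NormedAddCommGroup E] [NormedSpace 𝕜 E] {I : Set 𝕜} (hI : IsOpen I) {g : 𝕜 → E}
    (hg : ContDiffOn 𝕜 ∞ g I) (m : ℕ) {x : 𝕜} (hx : x ∈ I) :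
    HasDerivAt (iteratedDerivWithin m g I) (iteratedDerivWithin (m + 1) g I x) x := by
  have hd := (hg.differentiableOn_iteratedDerivWithin (m := m)
    (by exact_mod_cast WithTop.coe_lt_top _) hI.uniqueDiffOn).differentiableAt (hI.mem_nhds hx)
  rw [iteratedDerivWithin_succ, derivWithin_of_isOpen hI hx]
  exact hd.hasDerivAt

theorem exists_zero_Ioc_or_wronskian_zero_Ico {g h : ℝ → ℝ} {a b : ℝ} (hab : a < b)
    (hg : ∀ x ∈ Icc a b, DifferentiableAt ℝ g x) (hh : ∀ x ∈ Icc a b, DifferentiableAt ℝ h x)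
    (ha : h a = 0) (hb : h b = 0) :
    (∃ z ∈ Ioc a b, g z = 0) ∨ ∃ z ∈ Ico a b, g z * deriv h z - deriv g z * h z = 0 := by
  by_cases hgb : ∃ z ∈ Ioc a b, g z = 0
  · exact .inl hgb
  right
  by_cases hga : g a = 0
  · exact ⟨a, left_mem_Ico.2 hab, by simp [hga, ha]⟩
  push Not at hgb
  have hg0 : ∀ z ∈ Icc a b, g z ≠ 0 := fun z hz =>
    (eq_or_lt_of_le hz.1).elim (fun h => h ▸ hga) fun h => hgb z ⟨h, hz.2⟩
  obtain ⟨c, hc, hc0⟩ := exists_deriv_eq_zero hab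
    (ContinuousOn.div (fun z hz => (hh z hz).continuousAt.continuousWithinAt)
      (fun z hz => (hg z hz).continuousAt.continuousWithinAt) hg0) (by simp [ha, hb])
  have hcI : c ∈ Icc a b := Ioo_subset_Icc_self hc
  rw [deriv_div (hh c hcI) (hg c hcI) (hg0 c hcI), div_eq_zero_iff] at hc0
  refine ⟨c, Ioo_subset_Ico_self hc, ?_⟩
  rcases hc0 with hc0 | hc0
  · linear_combination hc0
  · exact absurd (pow_eq_zero_iff two_ne_zero |>.1 hc0) (hg0 c hcI)

section Gaps

variable {α : Type*} [LinearOrder α] {A B : Set α}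

theorem card_le_encard_add_encard_of_strictMono {m : ℕ} {s : Fin (m + 1) → α}
    (hs : StrictMono s)
    (h : ∀ i : Fin m, (A ∩ Ioc (s i.castSucc) (s i.succ)).Nonempty ∨
      (B ∩ Ico (s i.castSucc) (s i.succ)).Nonempty) :
    (m : ℕ∞) ≤ A.encard + B.encard := by
  have hw : ∀ i : Fin m, ∃ w : α ⊕ α, w ∈ Sum.inl '' (A ∩ Ioc (s i.castSucc) (s i.succ)) ∪
      Sum.inr '' (B ∩ Ico (s i.castSucc) (s i.succ)) := fun i =>
    (h i).elim (fun ⟨z, hz⟩ => ⟨_, .inl ⟨z, hz, rfl⟩⟩) fun ⟨z, hz⟩ => ⟨_, .inr ⟨z, hz, rfl⟩⟩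
  choose w hw using hw
  -- the gaps `(s i, s (i + 1)]` are pairwise disjoint, and so are the gaps `[s i, s (i + 1))`
  have hne : ∀ i j, i < j → w i ≠ w j := by
    intro i j hij hwij
    have hle : s i.succ ≤ s j.castSucc := hs.monotone (Fin.succ_le_castSucc_iff.2 hij)
    have hwj := hw j
    rw [← hwij] at hwj
    rcases hw i with ⟨z, hz, hzw⟩ | ⟨z, hz, hzw⟩ <;>
      rcases hwj with ⟨z', hz', hzw'⟩ | ⟨z', hz', hzw'⟩ <;> rw [← hzw] at hzw' <;>
      simp only [Sum.inl.injEq, Sum.inr.injEq, reduceCtorEq] at hzw'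
    · exact (hz'.2.1.trans_le' hle).not_ge (hzw' ▸ hz.2.2)
    · exact (hz.2.2.trans_le hle).not_ge (hzw' ▸ hz'.2.1)
  have hinj : Function.Injective w := fun i j hij =>
    (lt_trichotomy i j).elim (fun h => absurd hij (hne i j h))
      fun h => h.elim id fun h => absurd hij.symm (hne j i h)
  calc (m : ℕ∞) = (univ : Set (Fin m)).encard := by simp
    _ ≤ (Sum.inl '' A ∪ Sum.inr '' B).encard := by
      refine encard_le_encard_of_injOn (fun i _ => ?_) hinj.injOn
      rcases hw i with ⟨z, hz, hzw⟩ | ⟨z, hz, hzw⟩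
      · exact .inl ⟨z, hz.1, hzw⟩
      · exact .inr ⟨z, hz.1, hzw⟩
    _ ≤ A.encard + B.encard := by
      grw [encard_union_le, Sum.inl_injective.encard_image, Sum.inr_injective.encard_image]

theorem encard_le_one_add_encard_add_encard {S : Set α}
    (h : ∀ a ∈ S, ∀ b ∈ S, a < b → (A ∩ Ioc a b).Nonempty ∨ (B ∩ Ico a b).Nonempty) :
    S.encard ≤ 1 + A.encard + B.encard := by
  by_contra! hlt
  obtain ⟨N, hN⟩ : ∃ N : ℕ, A.encard + B.encard = N :=
    ENat.ne_top_iff_exists.1 (by rintro h; simp [add_assoc, h] at hlt) |>.imp fun _ h => h.symm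
  rw [add_assoc, hN] at hlt
  obtain ⟨T, hTS, hT⟩ := exists_subset_encard_eq (k := ((N + 1 + 1 : ℕ) : ℕ∞))
    (by push_cast; exact Order.add_one_le_of_lt (by rwa [add_comm] at hlt))
  have hTfin : T.Finite := finite_of_encard_eq_coe hT
  let s := hTfin.toFinset.orderEmbOfFin
    (by rw [← ENat.natCast_inj, ← hT, hTfin.encard_eq_coe_toFinset_card])
  have hsT : ∀ i, s i ∈ T := fun i => hTfin.mem_toFinset.1 (Finset.orderEmbOfFin_mem _ _ i)
  have := card_le_encard_add_encard_of_strictMono s.strictMono fun i =>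
    h _ (hTS (hsT _)) _ (hTS (hsT _)) (s.strictMono i.castSucc_lt_succ)
  rw [hN] at this
  norm_cast at this
  omega

end Gaps

theorem encard_zeros_le_one_add_encard_zeros {I : Set ℝ} (hI : I.OrdConnected) {g h : ℝ → ℝ}
    (hg : ∀ x ∈ I, DifferentiableAt ℝ g x) (hh : ∀ x ∈ I, DifferentiableAt ℝ h x) :
    {x ∈ I | h x = 0}.encard ≤ 1 + {x ∈ I | g x = 0}.encard +
      {x ∈ I | g x * deriv h x - deriv g x * h x = 0}.encard := by
  refine encard_le_one_add_encard_add_encard fun a ha b hb hab => ?_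
  have hab' : Icc a b ⊆ I := hI.out ha.1 hb.1
  rcases exists_zero_Ioc_or_wronskian_zero_Ico hab (fun x hx => hg x (hab' hx))
    (fun x hx => hh x (hab' hx)) ha.2 hb.2 with ⟨z, hz, hz0⟩ | ⟨z, hz, hz0⟩
  · exact .inl ⟨z, ⟨hab' (Ioc_subset_Icc_self hz), hz0⟩, hz⟩
  · exact .inr ⟨z, ⟨hab' (Ico_subset_Icc_self hz), hz0⟩, hz⟩

theorem Fin.snoc_restrict {α : Type*} (f : ℕ → α) (k : ℕ) :
    (Fin.snoc (fun j : Fin k => f j) (f k) : Fin (k + 1) → α) = fun j : Fin (k + 1) => f j :=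
  Fin.snoc_init_self (α := fun _ => α) fun j : Fin (k + 1) => f j

theorem le_sum_range_add_of_le_add {M : Type*} [AddCommMonoid M] [PartialOrder M]
    [IsOrderedAddMonoid M] {v c : ℕ → M} {n : ℕ} (h : ∀ k < n, v k ≤ c k + v (k + 1)) :
    v 0 ≤ ∑ k ∈ Finset.range n, c k + v n := by
  induction n with
  | zero => simp
  | succ n ih =>
    grw [ih fun k hk => h k (by omega), h n (by omega), Finset.sum_range_succ, add_assoc]

theorem sum_range_one_add_succ_add (z : ℕ → ℕ) (n : ℕ) :
    ∑ k ∈ Finset.range (n + 1), (1 + z (k + 1) + z k) =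
      n + 1 + z (n + 1) + 2 * ∑ j ∈ Finset.Icc 1 n, z j + z 0 := by
  have hshift : ∑ k ∈ Finset.range n, z (k + 1) = ∑ j ∈ Finset.Icc 1 n, z j := by
    rw [Finset.range_eq_Ico, Finset.sum_Ico_add', Finset.Ico_add_one_right_eq_Icc, zero_add]
  simp only [Finset.sum_add_distrib, Finset.sum_range_succ (fun k => z (k + 1)),
    Finset.sum_range_succ' z, hshift, Finset.sum_const, Finset.card_range, smul_eq_mul, mul_one]
  ring

section Wronskian

variable {ι : Type*} [Fintype ι] [DecidableEq ι] (I : Set ℝ)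

noncomputable def generalizedWronskian (r : ι → ℕ) (g : ι → ℝ → ℝ) (x : ℝ) : ℝ :=
  (Matrix.of fun i j => iteratedDerivWithin (r i) (g j) I x).det

noncomputable abbrev wronskian {n : ℕ} (g : Fin n → ℝ → ℝ) : ℝ → ℝ :=
  generalizedWronskian I (fun i : Fin n => (i : ℕ)) g

variable {I}

theorem generalizedWronskian_comp_equiv {κ : Type*} [Fintype κ] [DecidableEq κ] (e : κ ≃ ι)
    (r : ι → ℕ) (g : ι → ℝ → ℝ) :
    generalizedWronskian I (r ∘ e) (g ∘ e) = generalizedWronskian I r g := by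
  funext x
  exact det_submatrix_equiv_self e (of fun i j => iteratedDerivWithin (r i) (g j) I x)

theorem generalizedWronskian_mul_generalizedWronskian_inl {m : Type*} [Fintype m]
    [DecidableEq m] (r : m ⊕ Fin 2 → ℕ) (g : m ⊕ Fin 2 → ℝ → ℝ) (x : ℝ) :
    let σ (a : Fin 2) : m ⊕ Fin 1 → m ⊕ Fin 2 := Sum.map id fun _ => a
    generalizedWronskian I r g x * generalizedWronskian I (r ∘ .inl) (g ∘ .inl) x =
      generalizedWronskian I (r ∘ σ 0) (g ∘ σ 0) x * generalizedWronskian I (r ∘ σ 1) (g ∘ σ 1) x -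
        generalizedWronskian I (r ∘ σ 0) (g ∘ σ 1) x *
          generalizedWronskian I (r ∘ σ 1) (g ∘ σ 0) x :=
  (of fun i j => iteratedDerivWithin (r i) (g j) I x).det_mul_det_toBlocks₁₁

theorem hasDerivAt_generalizedWronskian (hI : IsOpen I) (r : ι → ℕ) {g : ι → ℝ → ℝ}
    (hg : ∀ j, ContDiffOn ℝ ∞ (g j) I) {x : ℝ} (hx : x ∈ I) :
    HasDerivAt (generalizedWronskian I r g)
      (∑ i, generalizedWronskian I (Function.update r i (r i + 1)) g x) x := by
  refine (hasDerivAt_det (A := fun y => of fun i j => iteratedDerivWithin (r i) (g j) I y)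
    fun i j => hasDerivAt_iteratedDerivWithin hI (hg j) (r i) hx).congr_deriv
    (Finset.sum_congr rfl fun i _ => congrArg det ?_)
  ext k j
  rcases eq_or_ne k i with rfl | hki <;> simp [updateRow_apply, *]

theorem hasDerivAt_wronskian (hI : IsOpen I) {n : ℕ} {g : Fin (n + 1) → ℝ → ℝ}
    (hg : ∀ j, ContDiffOn ℝ ∞ (g j) I) {x : ℝ} (hx : x ∈ I) :
    HasDerivAt (wronskian I g) (generalizedWronskian I
      (Function.update (fun i : Fin (n + 1) => (i : ℕ)) (Fin.last n) (n + 1)) g x) x := by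
  convert hasDerivAt_generalizedWronskian hI _ hg hx
  rw [Finset.sum_eq_single (Fin.last n) _ (by simp)]
  · simp
  intro i _ hi
  -- raising the order of row `i` duplicates row `i + 1`
  have hlt : (i : ℕ) + 1 < n + 1 := by
    have := Fin.val_lt_last hi; omega
  apply det_zero_of_row_eq (i := i) (j := ⟨i + 1, hlt⟩) (by simp [Fin.ext_iff])
  ext j
  simp [Function.update_apply, Fin.ext_iff]

theorem contDiffOn_snoc {n : ℕ} {g : Fin n → ℝ → ℝ} {u : ℝ → ℝ}
    (hg : ∀ j, ContDiffOn ℝ ∞ (g j) I) (hu : ContDiffOn ℝ ∞ u I) :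
    ∀ j, ContDiffOn ℝ ∞ (Fin.snoc (α := fun _ => ℝ → ℝ) g u j) I :=
  Fin.lastCases (by simpa) fun j => by simpa using hg j

theorem wronskian_snoc_snoc_mul_wronskian (hI : IsOpen I) {n : ℕ} {g : Fin n → ℝ → ℝ}
    {u v : ℝ → ℝ} (hg : ∀ j, ContDiffOn ℝ ∞ (g j) I) (hu : ContDiffOn ℝ ∞ u I)
    (hv : ContDiffOn ℝ ∞ v I) {x : ℝ} (hx : x ∈ I) :
    wronskian I (Fin.snoc (Fin.snoc g u) v) x * wronskian I g x =
      wronskian I (Fin.snoc g u) x * deriv (wronskian I (Fin.snoc g v)) x -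
        deriv (wronskian I (Fin.snoc g u)) x * wronskian I (Fin.snoc g v) x := by
  rw [(hasDerivAt_wronskian hI (contDiffOn_snoc hg hv) hx).deriv,
    (hasDerivAt_wronskian hI (contDiffOn_snoc hg hu) hx).deriv]
  let e₂ : Fin n ⊕ Fin 2 ≃ Fin (n + 2) := finSumFinEquiv
  let e₁ : Fin n ⊕ Fin 1 ≃ Fin (n + 1) := finSumFinEquiv
  let w : Fin (n + 2) → ℝ → ℝ := Fin.snoc (Fin.snoc g u) v
  let ρ : Fin (n + 1) → ℕ := Function.update (fun i => (i : ℕ)) (Fin.last n) (n + 1)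
  have he₂ : ∀ i, e₂ (.inl i) = i.castSucc.castSucc := fun i => rfl
  have he₂₀ : e₂ (.inr 0) = (Fin.last n).castSucc := Fin.ext (by simp [e₂])
  have he₂₁ : e₂ (.inr 1) = Fin.last (n + 1) := Fin.ext (by simp [e₂])
  have he₁ : ∀ i, e₁ (.inl i) = i.castSucc := fun i => rfl
  have he₁' : ∀ i, e₁ (.inr i) = Fin.last n := fun i => Fin.ext (by simp [e₁])
  have hrow : (fun i => (e₂ i : ℕ)) ∘ .inl = fun i : Fin n => (i : ℕ) := by
    funext i; simp [he₂]
  have hcol : (w ∘ e₂) ∘ .inl = g := by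
    funext i; simp [w, he₂]
  have hrow₀ : (fun i => (e₂ i : ℕ)) ∘ Sum.map id (fun _ => 0) =
      (fun i : Fin (n + 1) => (i : ℕ)) ∘ e₁ := by
    funext i; rcases i with i | i <;> simp [he₁, he₁', he₂, he₂₀]
  have hrow₁ : (fun i => (e₂ i : ℕ)) ∘ Sum.map id (fun _ => 1) = ρ ∘ e₁ := by
    funext i; rcases i with i | i <;> simp [ρ, he₁, he₁', he₂, he₂₁]
  have hcol₀ : (w ∘ e₂) ∘ Sum.map id (fun _ => 0) = Fin.snoc g u ∘ e₁ := by
    funext i; rcases i with i | i <;> simp [w, he₁, he₁', he₂, he₂₀]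
  have hcol₁ : (w ∘ e₂) ∘ Sum.map id (fun _ => 1) = Fin.snoc g v ∘ e₁ := by
    funext i; rcases i with i | i <;> simp [w, he₁, he₁', he₂, he₂₁]
  -- Desnanot–Jacobi for the Wronskian matrix of `(g, u, v)`: its four bordered minors are
  -- `W(g, u)`, `W(g, v)` and their derivatives (row `n` raised to order `n + 1`).
  have key := generalizedWronskian_mul_generalizedWronskian_inl (I := I) (fun i => (e₂ i : ℕ))
    (w ∘ e₂) x
  simp only [hrow, hcol, hrow₀, hrow₁, hcol₀, hcol₁, generalizedWronskian_comp_equiv] at key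
  rw [show (fun i => (e₂ i : ℕ)) = (fun i : Fin (n + 2) => (i : ℕ)) ∘ e₂ from rfl,
    generalizedWronskian_comp_equiv] at key
  linear_combination key

theorem encard_zeros_wronskian_snoc_le (hI : IsOpen I) (hI' : I.OrdConnected) {n : ℕ}
    {g : Fin n → ℝ → ℝ} {u v : ℝ → ℝ} (hg : ∀ j, ContDiffOn ℝ ∞ (g j) I)
    (hu : ContDiffOn ℝ ∞ u I) (hv : ContDiffOn ℝ ∞ v I) :
    {x ∈ I | wronskian I (Fin.snoc g v) x = 0}.encard ≤
      (1 + {x ∈ I | wronskian I (Fin.snoc g u) x = 0}.encard +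
        {x ∈ I | wronskian I g x = 0}.encard) +
        {x ∈ I | wronskian I (Fin.snoc (Fin.snoc g u) v) x = 0}.encard := by
  have hdiff : ∀ {w}, ContDiffOn ℝ ∞ w I → ∀ x ∈ I,
      DifferentiableAt ℝ (wronskian I (Fin.snoc g w)) x := fun hw x hx =>
    (hasDerivAt_wronskian hI (contDiffOn_snoc hg hw) hx).differentiableAt
  have hsub : {x ∈ I | wronskian I (Fin.snoc g u) x * deriv (wronskian I (Fin.snoc g v)) x -
        deriv (wronskian I (Fin.snoc g u)) x * wronskian I (Fin.snoc g v) x = 0} ⊆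
      {x ∈ I | wronskian I g x = 0} ∪
        {x ∈ I | wronskian I (Fin.snoc (Fin.snoc g u) v) x = 0} := by
    rintro x ⟨hx, hx0⟩
    rw [← wronskian_snoc_snoc_mul_wronskian hI hg hu hv hx, mul_eq_zero] at hx0
    exact hx0.elim (fun h => .inr ⟨hx, h⟩) fun h => .inl ⟨hx, h⟩
  calc _ ≤ _ := encard_zeros_le_one_add_encard_zeros hI' (hdiff hu) (hdiff hv)
    _ ≤ _ := by grw [encard_le_encard hsub, encard_union_le]
    _ = _ := by rw [add_assoc _ {x ∈ I | wronskian I g x = 0}.encard]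

theorem wronskian_snoc_init_sum (hI : IsOpen I) {n : ℕ} {g : Fin (n + 1) → ℝ → ℝ}
    (hg : ∀ j, ContDiffOn ℝ ∞ (g j) I) {x : ℝ} (hx : x ∈ I) :
    wronskian I (Fin.snoc (Fin.init g) (∑ j, g j)) x = wronskian I g x := by
  have hcol : (of fun i j : Fin (n + 1) =>
        iteratedDerivWithin i (Fin.snoc (α := fun _ => ℝ → ℝ) (Fin.init g) (∑ j, g j) j) I x) =
      (of fun i j : Fin (n + 1) => iteratedDerivWithin i (g j) I x).updateCol (Fin.last n)
        fun i => ∑ j, (1 : ℝ) • iteratedDerivWithin i (g j) I x := by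
    ext i j
    cases j using Fin.lastCases with
    | last =>
      simp only [of_apply, Fin.snoc_last, updateCol_self, one_smul]
      exact iteratedDerivWithin_sum hx hI.uniqueDiffOn fun j _ =>
        ((hg j).contDiffWithinAt hx).of_le (by exact_mod_cast le_top)
    | cast j => simp [Fin.init]
  rw [wronskian, generalizedWronskian, hcol]
  exact (det_updateCol_sum _ (Fin.last n) fun _ => 1).trans (one_smul ℝ _)

theorem wronskian_fin_zero (g : Fin 0 → ℝ → ℝ) (x : ℝ) : wronskian I g x = 1 :=
  det_isEmpty

theorem wronskian_fin_one (g : Fin 1 → ℝ → ℝ) (x : ℝ) : wronskian I g x = g 0 x := by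
  simp [wronskian, generalizedWronskian, det_unique]

theorem encard_zeros_sum_le (hI : IsOpen I) (hI' : I.OrdConnected) {f : ℕ → ℝ → ℝ} {n : ℕ}
    (hf : ∀ i < n + 1, ContDiffOn ℝ ∞ (f i) I) :
    {x ∈ I | ∑ i ∈ Finset.range (n + 1), f i x = 0}.encard ≤
      ∑ k ∈ Finset.range n, (1 + {x ∈ I | wronskian I (fun j : Fin (k + 1) => f j) x = 0}.encard +
          {x ∈ I | wronskian I (fun j : Fin k => f j) x = 0}.encard) +
        {x ∈ I | wronskian I (fun j : Fin (n + 1) => f j) x = 0}.encard := by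
  set F : ℝ → ℝ := fun x => ∑ i ∈ Finset.range (n + 1), f i x
  have hF : F = ∑ j : Fin (n + 1), f j := by
    funext x
    simp [F, Finset.sum_apply, Fin.sum_univ_eq_sum_range (fun i => f i x)]
  let V (k : ℕ) := wronskian I (Fin.snoc (fun j : Fin k => f j) F)
  have hV₀ : {x ∈ I | V 0 x = 0} = {x ∈ I | F x = 0} :=
    sep_ext_iff.2 fun x _ => by rw [show V 0 x = F x from wronskian_fin_one _ x]
  have hVn : {x ∈ I | V n x = 0} = {x ∈ I | wronskian I (fun j : Fin (n + 1) => f j) x = 0} := by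
    refine sep_ext_iff.2 fun x hx => ?_
    rw [← wronskian_snoc_init_sum hI (fun j => hf j j.isLt) hx, ← hF]
    rfl
  rw [← hV₀, ← hVn]
  refine le_sum_range_add_of_le_add (v := fun k => {x ∈ I | V k x = 0}.encard) fun k hk => ?_
  have := encard_zeros_wronskian_snoc_le hI hI' (fun j : Fin k => hf j (by omega))
    (hf k (by omega)) (ContDiffOn.sum fun i hi => hf i (Finset.mem_range.1 hi))
  rwa [Fin.snoc_restrict] at this

end Wronskian

theorem zeros_sum_le_wronskian_zeros_general
    (t : ℕ) (ht : 2 ≤ t)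
    (I : Set ℝ) (hIopen : IsOpen I) (hIconn : IsPreconnected I)
    (f : ℕ → ℝ → ℝ)
    (hf : ∀ i < t, AnalyticOnNhd ℝ (f i) I)
    (W : ℕ → ℝ → ℝ)
    (hW : ∀ k, W k = fun x =>
      Matrix.det (Matrix.of fun i j : Fin k => iteratedDerivWithin i (f j) I x))
    (hfin : ∀ j, 1 ≤ j → j ≤ t → {x ∈ I | W j x = 0}.Finite) :
    {x ∈ I | ∑ i ∈ Finset.range t, f i x = 0}.Finite ∧
      {x ∈ I | ∑ i ∈ Finset.range t, f i x = 0}.ncard ≤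
        (t - 1) + {x ∈ I | W t x = 0}.ncard + {x ∈ I | W (t - 1) x = 0}.ncard +
          2 * ∑ j ∈ Finset.Icc 1 (t - 2), {x ∈ I | W j x = 0}.ncard := by
  obtain ⟨n, rfl⟩ : ∃ n, t = n + 1 + 1 := ⟨t - 2, by omega⟩
  have hWk : ∀ k, W k = wronskian I (fun j : Fin k => f j) := hW
  have hZ : ∀ j ≤ n + 2, {x ∈ I | W j x = 0}.encard = {x ∈ I | W j x = 0}.ncard := by
    intro j hj
    rcases j.eq_zero_or_pos with rfl | hj0
    · simp [hWk, wronskian_fin_zero]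
    · exact (hfin j hj0 hj).cast_ncard_eq.symm
  have hW₀ : {x ∈ I | W 0 x = 0}.ncard = 0 := by
    simp [hWk, wronskian_fin_zero]
  have h := encard_zeros_sum_le hIopen (isPreconnected_iff_ordConnected.1 hIconn)
    fun i hi => (hf i hi).contDiffOn hIopen.uniqueDiffOn
  simp only [← hWk] at h
  rw [← encard_le_coe_iff_finite_ncard_le]
  refine h.trans_eq ?_
  rw [Finset.sum_congr rfl fun k hk => by
    rw [hZ (k + 1) (by simp at hk; omega), hZ k (by simp at hk; omega)], hZ _ le_rfl]
  norm_cast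
  rw [sum_range_one_add_succ_add (fun j => {x ∈ I | W j x = 0}.ncard), hW₀]
  rw [show n + 1 + 1 - 1 = n + 1 by omega, show n + 1 + 1 - 2 = n by omega]
  ring

/-- **Wronskian bound on real zeros (Theorem 5 of [KPT13]).**
Let `I` be an open interval of `ℝ` and `f 0, …, f (t-1) : I → ℝ` (with `t ≥ 2`) analytic
functions, linearly independent over `ℝ` on `I`.  For `1 ≤ i ≤ t` let `W i` be the Wronskian
of `f 0, …, f (i-1)`.  If each `W j` has finitely many zeros on `I`, then the sum
`f 0 + ⋯ + f (t-1)` has finitely many zeros on `I` and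
`Z(∑ f) ≤ t - 1 + Z(W t) + Z(W (t-1)) + 2 ∑_{j=1}^{t-2} Z(W j)`. -/
theorem zeros_sum_le_wronskian_zeros
    (t : ℕ) (ht : 2 ≤ t)
    (I : Set ℝ) (hIopen : IsOpen I) (hIconn : IsPreconnected I)
    (f : ℕ → ℝ → ℝ)
    (hf : ∀ i < t, AnalyticOnNhd ℝ (f i) I)
    (hli : LinearIndependent ℝ fun i : Fin t => I.restrict (f i))
    (W : ℕ → ℝ → ℝ)
    (hW : ∀ k, W k = fun x =>
      Matrix.det (Matrix.of fun i j : Fin k => iteratedDerivWithin i (f j) I x))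
    (hfin : ∀ j, 1 ≤ j → j ≤ t → {x ∈ I | W j x = 0}.Finite) :
    {x ∈ I | ∑ i ∈ Finset.range t, f i x = 0}.Finite ∧
      {x ∈ I | ∑ i ∈ Finset.range t, f i x = 0}.ncard ≤
        (t - 1) + {x ∈ I | W t x = 0}.ncard + {x ∈ I | W (t - 1) x = 0}.ncard +
          2 * ∑ j ∈ Finset.Icc 1 (t - 2), {x ∈ I | W j x = 0}.ncard :=
  zeros_sum_le_wronskian_zeros_general t ht I hIopen hIconn f hf W hW hfin
end

section
/- Let F ∈ ℝ[X,Y] be a bivariate polynomial of total degree d. For integers a, b ≥ 0 write F_{X^a Y^b} for the mixed partial derivative ∂^{a+b}F/∂X^a∂Y^b, and F_Y = F_{X^0Y^1}. For every integer k ≥ 1 there exists a polynomial S_k, in the C(k+2,2) − 1 variables indexed by the pairs (a,b) of natural numbers with 1 ≤ a + b ≤ k, of total degree at most 2k − 1 (and depending only on k and F), with the following property: for every open interval I ⊆ ℝ and every infinitely differentiable function φ : I → ℝ such that F(x, φ(x)) = 0 and F_Y(x, φ(x)) ≠ 0 for all x ∈ I, one has for all x ∈ I: φ^{(k)}(x)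 = S_k( (F_{X^aY^b}(x, φ(x)))_{1 ≤ a+b ≤ k} ) / (F_Y(x, φ(x)))^{2k−1}. -/
/-!
Along the graph of `φ`, the chain rule and `φ' = -F_X / F_Y` give
`F_Y · d/dx F_{X^aY^b}(x, φ x) = F_{X^{a+1}Y^b} F_Y - F_{X^aY^{b+1}} F_X`.
So `F_Y · d/dx` acts on polynomial expressions in the partial derivatives of `F` as the derivation
`D` with `D X_{a,b} = X_{a+1,b} X_{0,1} - X_{a,b+1} X_{1,0}`, which raises homogeneous degrees by
one. The quotient rule then gives the recursion
`S_{k+1} = X_{0,1} D S_k - (2k-1) S_k D X_{0,1}`, whose terms are homogeneous of degree `2k+1` and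
involve only the variables `X_{a,b}` with `1 ≤ a + b ≤ k + 1`.
-/

open MvPolynomial

/-- The iterated partial derivative `∂^{a+b} F / ∂X^a ∂Y^b` of a bivariate polynomial
(variable `0` plays the role of `X` and variable `1` that of `Y`). -/
noncomputable def mixedPderiv (a b : ℕ) (F : MvPolynomial (Fin 2) ℝ) :
    MvPolynomial (Fin 2) ℝ :=
  (pderiv (0 : Fin 2))^[a] ((pderiv (1 : Fin 2))^[b] F)

namespace MvPolynomial

variable {σ R : Type*} [CommSemiring R]

theorem pderiv_pderiv_comm (i j : σ) (p : MvPolynomial σ R) :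
    pderiv i (pderiv j p) = pderiv j (pderiv i p) := by
  classical
  induction p using MvPolynomial.induction_on with
  | C a => simp
  | add p q hp hq => simp [hp, hq]
  | mul_X p s ih =>
    have hX : ∀ a b : σ, pderiv a (pderiv b (X (R := R) s)) = 0 := by
      intro a b
      rcases eq_or_ne b s with rfl | h
      · simp
      · simp [h]
    simp only [pderiv_mul, map_add, ih, hX]
    ring

theorem derivation_mem_supported (D : Derivation R (MvPolynomial σ R) (MvPolynomial σ R))
    {s t : Set σ} (hst : s ⊆ t) (hD : ∀ i ∈ s, D (X i) ∈ supported R t)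
    {p : MvPolynomial σ R} (hp : p ∈ supported R s) : D p ∈ supported R t := by
  rw [supported_eq_adjoin_X] at hp
  induction hp using Algebra.adjoin_induction with
  | mem x hx =>
    obtain ⟨i, hi, rfl⟩ := hx
    exact hD i hi
  | algebraMap r => simp
  | add x y _ _ hx hy => simpa using add_mem hx hy
  | mul x y hxs hys hx hy =>
    rw [Derivation.leibniz, smul_eq_mul, smul_eq_mul]
    have h := supported_mono (R := R) hst
    rw [supported_eq_adjoin_X] at h
    exact add_mem (mul_mem (h hxs) hy) (mul_mem (h hys) hx)

theorem IsHomogeneous.derivation_monomial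
    (D : Derivation R (MvPolynomial σ R) (MvPolynomial σ R)) {m : ℕ}
    (hD : ∀ i, (D (X i)).IsHomogeneous (m + 1)) (d : σ →₀ ℕ) (r : R) :
    (D (monomial d r)).IsHomogeneous (d.degree + m) := by
  induction d using Finsupp.induction_linear generalizing r with
  | zero => simp [isHomogeneous_zero]
  | add f g hf hg =>
    rw [← mul_one r, ← monomial_mul, Derivation.leibniz, smul_eq_mul, smul_eq_mul, map_add]
    refine IsHomogeneous.add ?_ ?_
    · convert (isHomogeneous_monomial r rfl).mul (hg 1) using 1
      ring
    · convert (isHomogeneous_monomial 1 rfl).mul (hf r) using 1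
      ring
  | single i k =>
    rcases k with _ | k
    · simp [isHomogeneous_zero]
    · rw [← C_mul_X_pow_eq_monomial, C_mul', D.map_smul, Derivation.leibniz_pow,
        Finsupp.degree_single, add_right_comm, add_assoc]
      have h : X i ^ k * D (X i) ∈ homogeneousSubmodule σ R (k + (m + 1)) :=
        (isHomogeneous_X_pow i k).mul (hD i)
      exact Submodule.smul_mem _ r (Submodule.smul_of_tower_mem _ (k + 1) h)

theorem IsHomogeneous.derivation (D : Derivation R (MvPolynomial σ R) (MvPolynomial σ R))
    {m n : ℕ} (hD : ∀ i, (D (X i)).IsHomogeneous (m + 1)) {p : MvPolynomial σ R}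
    (hp : p.IsHomogeneous n) : (D p).IsHomogeneous (n + m) := by
  induction hp using IsWeightedHomogeneous.induction_on with
  | zero => simp [isHomogeneous_zero]
  | add p q _ _ hp hq => simpa using hp.add hq
  | monomial d r hr =>
    have := IsHomogeneous.derivation_monomial D hD d r
    rwa [Finsupp.degree_eq_weight_one, ← Pi.one_def, hr] at this

theorem hasDerivAt_eval_of_derivation {𝕜 : Type*} [NontriviallyNormedField 𝕜]
    (D : Derivation 𝕜 (MvPolynomial σ 𝕜) (MvPolynomial σ 𝕜)) {c : 𝕜 → σ → 𝕜} {x : 𝕜}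
    (hc : ∀ i, HasDerivAt (fun t => c t i) (eval (c x) (D (X i))) x) (p : MvPolynomial σ 𝕜) :
    HasDerivAt (fun t => eval (c t) p) (eval (c x) (D p)) x := by
  induction p using MvPolynomial.induction_on with
  | C a => simpa using hasDerivAt_const x a
  | add p q hp hq => simpa using hp.fun_add hq
  | mul_X p i hp => simpa [Derivation.leibniz, add_comm, mul_comm] using hp.fun_mul (hc i)

theorem hasDerivAt_eval_graph {𝕜 : Type*} [NontriviallyNormedField 𝕜]
    (F : MvPolynomial (Fin 2) 𝕜) {φ : 𝕜 → 𝕜} {φ' x : 𝕜} (hφ : HasDerivAt φ φ' x) :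
    HasDerivAt (fun t => eval ![t, φ t] F)
      (eval ![x, φ x] (pderiv 0 F) + φ' * eval ![x, φ x] (pderiv 1 F)) x := by
  refine (hasDerivAt_eval_of_derivation (pderiv 0 + φ' • pderiv 1) (fun i => ?_) F).congr_deriv
    (by simp)
  fin_cases i
  · simpa using hasDerivAt_id' x
  · simpa using hφ

end MvPolynomial

theorem pderiv_zero_mixedPderiv (a b : ℕ) (F : MvPolynomial (Fin 2) ℝ) :
    pderiv 0 (mixedPderiv a b F) = mixedPderiv (a + 1) b F := by
  simp only [mixedPderiv, Function.iterate_succ_apply']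

theorem pderiv_one_mixedPderiv (a b : ℕ) (F : MvPolynomial (Fin 2) ℝ) :
    pderiv 1 (mixedPderiv a b F) = mixedPderiv a (b + 1) F := by
  induction a with
  | zero => simp only [mixedPderiv, Function.iterate_zero_apply, Function.iterate_succ_apply']
  | succ a ih =>
    simp only [mixedPderiv, Function.iterate_succ_apply'] at ih ⊢
    rw [pderiv_pderiv_comm, ih]

noncomputable def pderivJet (F : MvPolynomial (Fin 2) ℝ) (x y : ℝ) (v : ℕ × ℕ) : ℝ :=
  eval ![x, y] (mixedPderiv v.1 v.2 F)

noncomputable def implicitField (v : ℕ × ℕ) : MvPolynomial (ℕ × ℕ) ℝ :=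
  X (v.1 + 1, v.2) * X (0, 1) - X (v.1, v.2 + 1) * X (1, 0)

noncomputable def implicitDerivation :
    Derivation ℝ (MvPolynomial (ℕ × ℕ) ℝ) (MvPolynomial (ℕ × ℕ) ℝ) :=
  mkDerivation ℝ implicitField

/-- `implicitDerivPoly n` is the numerator `S_{n+1}` of `φ^{(n+1)} = S_{n+1} / F_Y ^ (2n+1)`. -/
noncomputable def implicitDerivPoly : ℕ → MvPolynomial (ℕ × ℕ) ℝ
  | 0 => -X (1, 0)
  | n + 1 => X (0, 1) * implicitDerivation (implicitDerivPoly n) -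
      C (2 * n + 1 : ℝ) * implicitDerivPoly n * implicitField (0, 1)

theorem isHomogeneous_implicitField (v : ℕ × ℕ) : (implicitField v).IsHomogeneous 2 :=
  ((isHomogeneous_X _ _).mul (isHomogeneous_X _ _)).sub
    ((isHomogeneous_X _ _).mul (isHomogeneous_X _ _))

theorem isHomogeneous_implicitDerivPoly (n : ℕ) :
    (implicitDerivPoly n).IsHomogeneous (2 * n + 1) := by
  induction n with
  | zero => exact (isHomogeneous_X _ _).neg
  | succ n ih =>
    have hD := ih.derivation implicitDerivation fun v => by
      simpa [implicitDerivation] using isHomogeneous_implicitField v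
    have hX := (isHomogeneous_X ℝ (0, 1)).mul hD
    rw [add_comm] at hX
    rw [show 2 * (n + 1) + 1 = 2 * n + 1 + 2 by ring]
    exact hX.sub ((ih.C_mul _).mul (isHomogeneous_implicitField _))

def jetIndices (k : ℕ) : Set (ℕ × ℕ) := {v | 1 ≤ v.1 + v.2 ∧ v.1 + v.2 ≤ k}

theorem implicitDerivPoly_mem_supported (n : ℕ) :
    implicitDerivPoly n ∈ supported ℝ (jetIndices (n + 1)) := by
  have hX : ∀ {v : ℕ × ℕ} {k : ℕ}, 1 ≤ v.1 + v.2 → v.1 + v.2 ≤ k →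
      (X v : MvPolynomial (ℕ × ℕ) ℝ) ∈ supported ℝ (jetIndices k) :=
    fun h1 h2 => X_mem_supported.2 ⟨h1, h2⟩
  have hField : ∀ {v : ℕ × ℕ} {k : ℕ}, v.1 + v.2 + 1 ≤ k →
      implicitField v ∈ supported ℝ (jetIndices k) :=
    fun h => sub_mem (mul_mem (hX (by omega) (by omega)) (hX (by omega) (by omega)))
      (mul_mem (hX (by omega) (by omega)) (hX (by omega) (by omega)))
  induction n with
  | zero => exact neg_mem (hX (by simp) (by simp))
  | succ n ih =>
    have hmono : jetIndices (n + 1) ⊆ jetIndices (n + 2) :=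
      fun v hv => ⟨hv.1, hv.2.trans (Nat.le_succ _)⟩
    have hD : implicitDerivation (implicitDerivPoly n) ∈ supported ℝ (jetIndices (n + 2)) :=
      derivation_mem_supported _ hmono
        (fun v hv => by simpa [implicitDerivation] using hField (Nat.succ_le_succ hv.2)) ih
    exact sub_mem (mul_mem (hX (by simp) (by simp)) hD)
      (mul_mem (mul_mem (Subalgebra.algebraMap_mem _ _) (supported_mono hmono ih))
        (hField (by simp)))

section ImplicitFunction

variable {F : MvPolynomial (Fin 2) ℝ} {φ : ℝ → ℝ} {I : Set ℝ} {x : ℝ}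

theorem hasDerivAt_of_eval_eq_zero (hI : IsOpen I) (hφ : DifferentiableOn ℝ φ I)
    (h0 : ∀ t ∈ I, eval ![t, φ t] F = 0) (hx : x ∈ I) (hY : pderivJet F x (φ x) (0, 1) ≠ 0) :
    HasDerivAt φ (-pderivJet F x (φ x) (1, 0) / pderivJet F x (φ x) (0, 1)) x := by
  have hd := (hφ.differentiableAt (hI.mem_nhds hx)).hasDerivAt
  have hF : HasDerivAt (fun t => eval ![t, φ t] F) 0 x :=
    (hasDerivAt_const x 0).congr_of_eventuallyEq
      (Filter.eventuallyEq_of_mem (hI.mem_nhds hx) h0)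
  have h := (hasDerivAt_eval_graph F hd).unique hF
  refine hd.congr_deriv ?_
  rw [eq_div_iff hY]
  change deriv φ x * eval ![x, φ x] (pderiv 1 F) = -eval ![x, φ x] (pderiv 0 F)
  change _ + _ * eval ![x, φ x] (pderiv 1 F) = 0 at h
  linarith

theorem hasDerivAt_eval_jet
    (hφ : HasDerivAt φ (-pderivJet F x (φ x) (1, 0) / pderivJet F x (φ x) (0, 1)) x)
    (hY : pderivJet F x (φ x) (0, 1) ≠ 0) (p : MvPolynomial (ℕ × ℕ) ℝ) :
    HasDerivAt (fun t => eval (pderivJet F t (φ t)) p)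
      (eval (pderivJet F x (φ x)) (implicitDerivation p) / pderivJet F x (φ x) (0, 1)) x := by
  refine (hasDerivAt_eval_of_derivation ((pderivJet F x (φ x) (0, 1))⁻¹ • implicitDerivation)
    (fun v => ?_) p).congr_deriv (by simp [div_eq_inv_mul])
  have h := hasDerivAt_eval_graph (mixedPderiv v.1 v.2 F) hφ
  rw [pderiv_zero_mixedPderiv, pderiv_one_mixedPderiv] at h
  refine h.congr_deriv ?_
  change pderivJet F x (φ x) (v.1 + 1, v.2) + _ * pderivJet F x (φ x) (v.1, v.2 + 1) = _
  simp only [Derivation.smul_apply, implicitDerivation, mkDerivation_X, implicitField, smul_eval,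
    map_sub, map_mul, eval_X]
  field_simp
  ring

theorem iteratedDerivWithin_succ_eq_eval_implicitDerivPoly (hI : IsOpen I)
    (hφ : DifferentiableOn ℝ φ I) (h0 : ∀ t ∈ I, eval ![t, φ t] F = 0)
    (hY : ∀ t ∈ I, pderivJet F t (φ t) (0, 1) ≠ 0) (n : ℕ) (hx : x ∈ I) :
    iteratedDerivWithin (n + 1) φ I x =
      eval (pderivJet F x (φ x)) (implicitDerivPoly n) /
        pderivJet F x (φ x) (0, 1) ^ (2 * n + 1) := by
  have hφ' := hasDerivAt_of_eval_eq_zero hI hφ h0 hx (hY x hx)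
  induction n generalizing x with
  | zero =>
    rw [iteratedDerivWithin_one, derivWithin_of_isOpen hI hx, hφ'.deriv]
    simp [implicitDerivPoly, neg_div]
  | succ n ih =>
    have hN := hasDerivAt_eval_jet hφ' (hY x hx) (implicitDerivPoly n)
    have hQ := hasDerivAt_eval_jet hφ' (hY x hx) (X (0, 1))
    simp only [eval_X] at hQ
    have hloc : iteratedDerivWithin (n + 1) φ I =ᶠ[nhds x] fun t =>
        eval (pderivJet F t (φ t)) (implicitDerivPoly n) /
          pderivJet F t (φ t) (0, 1) ^ (2 * n + 1) :=
      Filter.eventuallyEq_of_mem (hI.mem_nhds hx) fun t ht =>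
        ih ht (hasDerivAt_of_eval_eq_zero hI hφ h0 ht (hY t ht))
    rw [iteratedDerivWithin_succ, derivWithin_of_isOpen hI hx, hloc.deriv_eq,
      (hN.fun_div (hQ.fun_pow (2 * n + 1)) (pow_ne_zero _ (hY x hx))).deriv]
    have hYx := hY x hx
    simp only [implicitDerivPoly, implicitDerivation, mkDerivation_X, eval_X, map_sub, map_mul,
      eval_C, add_tsub_cancel_right]
    push_cast
    field_simp
    ring

end ImplicitFunction

theorem iteratedDeriv_implicit_eq_poly_div_pow_general
    (F : MvPolynomial (Fin 2) ℝ)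
    (k : ℕ) (hk : 1 ≤ k) :
    ∃ S : MvPolynomial {ab : ℕ × ℕ // 1 ≤ ab.1 + ab.2 ∧ ab.1 + ab.2 ≤ k} ℝ,
      S.totalDegree ≤ 2 * k - 1 ∧
      ∀ (I : Set ℝ), IsOpen I →
        ∀ φ : ℝ → ℝ, ContDiffOn ℝ (⊤ : ℕ∞) φ I →
          (∀ x ∈ I, eval ![x, φ x] F = 0) →
          (∀ x ∈ I, eval ![x, φ x] (pderiv (1 : Fin 2) F) ≠ 0) →
          ∀ x ∈ I,
            iteratedDerivWithin k φ I x =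
              eval (fun v : {ab : ℕ × ℕ // 1 ≤ ab.1 + ab.2 ∧ ab.1 + ab.2 ≤ k} =>
                  eval ![x, φ x] (mixedPderiv v.1.1 v.1.2 F)) S /
                (eval ![x, φ x] (pderiv (1 : Fin 2) F)) ^ (2 * k - 1) := by
  obtain ⟨n, rfl⟩ : ∃ n, k = n + 1 := ⟨k - 1, by omega⟩
  obtain ⟨S, hS⟩ : ∃ S : MvPolynomial (jetIndices (n + 1)) ℝ,
      rename Subtype.val S = implicitDerivPoly n := by
    rw [← AlgHom.mem_range, ← supported_eq_range_rename]
    exact implicitDerivPoly_mem_supported n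
  have hdeg : 2 * (n + 1) - 1 = 2 * n + 1 := by omega
  refine ⟨S, hdeg ▸ ?_, fun I hI φ hφ h0 hY x hx => ?_⟩
  · have h := isHomogeneous_implicitDerivPoly n
    rw [← hS, IsHomogeneous.rename_isHomogeneous_iff Subtype.val_injective] at h
    exact h.totalDegree_le
  · rw [hdeg, iteratedDerivWithin_succ_eq_eval_implicitDerivPoly hI
      (hφ.differentiableOn (by simp)) h0 hY n hx, ← hS, eval_rename]
    rfl

/-- **Derivatives of an algebraic function (Lemma 3).**
Let `F ∈ ℝ[X,Y]` and `k ≥ 1`.  There is a polynomial `S_k` of total degree at most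
`2k - 1` in the `C(k+2,2) - 1` variables indexed by pairs `(a,b)` with `1 ≤ a+b ≤ k`
(depending only on `k` and `F`), such that for every open interval `I` and every `C^∞`
implicit function `φ : I → ℝ` with `F(x, φ(x)) = 0` and `F_Y(x, φ(x)) ≠ 0` on `I`:
`φ^{(k)}(x) = S_k((F_{X^aY^b}(x, φ(x)))_{1 ≤ a+b ≤ k}) / (F_Y(x, φ(x)))^{2k-1}`. -/
theorem iteratedDeriv_implicit_eq_poly_div_pow
    (F : MvPolynomial (Fin 2) ℝ) (d : ℕ) (hd : F.totalDegree = d)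
    (k : ℕ) (hk : 1 ≤ k) :
    ∃ S : MvPolynomial {ab : ℕ × ℕ // 1 ≤ ab.1 + ab.2 ∧ ab.1 + ab.2 ≤ k} ℝ,
      S.totalDegree ≤ 2 * k - 1 ∧
      ∀ (I : Set ℝ), IsOpen I →
        ∀ φ : ℝ → ℝ, ContDiffOn ℝ (⊤ : ℕ∞) φ I →
          (∀ x ∈ I, eval ![x, φ x] F = 0) →
          (∀ x ∈ I, eval ![x, φ x] (pderiv (1 : Fin 2) F) ≠ 0) →
          ∀ x ∈ I,
            iteratedDerivWithin k φ I x =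
              eval (fun v : {ab : ℕ × ℕ // 1 ≤ ab.1 + ab.2 ∧ ab.1 + ab.2 ≤ k} =>
                  eval ![x, φ x] (mixedPderiv v.1.1 v.1.2 F)) S /
                (eval ![x, φ x] (pderiv (1 : Fin 2) F)) ^ (2 * k - 1) :=
  iteratedDeriv_implicit_eq_poly_div_pow_general F k hk
end

section
/- Let g ∈ ℂ[X,Y] be an irreducible bivariate polynomial of total degree d ≥ 1. Then the set of singular zeros of g in ℂ², i.e., the set {(x,y) ∈ ℂ² : g(x,y) = 0, ∂g/∂X(x,y) = 0, ∂g/∂Y(x,y) = 0}, is finite with at most d(d−1) elements. -/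
/-!
In characteristic zero some partial derivative `h = ∂g/∂Xᵢ` of `g` is nonzero, of degree
`≤ d - 1`, hence not divisible by the prime `g`. Singular zeros are common zeros of `g` and `h`,
so it suffices to prove a weak Bézout bound: if `f` is prime of degree `m` and does not divide
`h` of degree `n`, then `f` and `h` have at most `mn` common zeros.

For a set `T` of `N` common zeros, let `V s` be the polynomials of degree `≤ s`, of dimension
`(s+1)(s+2)/2`, and take `s = m + n + N`. Evaluation at `T` maps `V s` onto `K^T`, and
kills `A = f·V(s-m) + h·V(s-n)`. As `f` is prime and `f ∤ h`, we have
`f·V(s-m) ∩ h·V(s-n) ⊆ fh·V(s-m-n)`, so `dim A ≥ dim V(s-m) + dim V(s-n) - dim V(s-m-n)`,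
and comparing with `dim A ≤ dim V s - N` yields
`N ≤ dim V s - dim V(s-m) - dim V(s-n) + dim V(s-m-n) = mn`.
-/

open MvPolynomial Finset Module

theorem Submodule.finrank_add_finrank_le_of_map_eq_top {K V F : Type*} [Field K]
    [AddCommGroup V] [Module K V] [AddCommGroup F] [Module K F] (E : V →ₗ[K] F)
    {W P : Submodule K V} [FiniteDimensional K W] (hW : W.map E = ⊤) (hPW : P ≤ W)
    (hPE : P ≤ LinearMap.ker E) :
    finrank K P + finrank K F ≤ finrank K W := by
  have hker : P.comap W.subtype ≤ LinearMap.ker (E.domRestrict W) := by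
    rw [LinearMap.ker_domRestrict]
    exact Submodule.comap_mono hPE
  have hrange := (E.domRestrict W).finrank_range_add_finrank_ker
  rw [LinearMap.range_domRestrict, hW, finrank_top] at hrange
  rw [← (Submodule.comapSubtypeEquivOfLe hPW).finrank_eq]
  linarith [Submodule.finrank_mono hker]

namespace MvPolynomial

variable {σ R K : Type*}

section PDeriv

variable [CommSemiring R] {p : MvPolynomial σ R}

theorem totalDegree_pderiv_lt {i : σ} (hp : pderiv i p ≠ 0) :
    (pderiv i p).totalDegree < p.totalDegree := by
  classical
  have hlt : ∀ m ∈ (pderiv i p).support, (m.sum fun _ e => e) < p.totalDegree := by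
    intro m hm
    rw [mem_support_iff, coeff_pderiv] at hm
    have := le_totalDegree (mem_support_iff.mpr (left_ne_zero_of_mul hm))
    rw [Finsupp.sum_add_index' (fun _ => rfl) (fun _ _ _ => rfl),
      Finsupp.sum_single_index rfl] at this
    omega
  obtain ⟨m, hm⟩ := Finset.nonempty_of_ne_empty (support_eq_empty.not.mpr hp)
  exact (Finset.sup_lt_iff (Nat.zero_lt_of_lt (hlt m hm))).mpr hlt

theorem exists_pderiv_ne_zero [CharZero R] [NoZeroDivisors R] (hp : p.totalDegree ≠ 0) :
    ∃ i, pderiv i p ≠ 0 := by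
  classical
  obtain ⟨m, hm, hm0⟩ : ∃ m ∈ p.support, m ≠ 0 := by
    by_contra! h
    exact hp ((Finset.sup_eq_bot_iff _ _).mpr fun m hm => by simp [h m hm])
  obtain ⟨i, hi⟩ := Finsupp.ne_iff.mp hm0
  refine ⟨i, fun hpi => ?_⟩
  have hle : Finsupp.single i 1 ≤ m := Finsupp.single_le_iff.mpr (Nat.one_le_iff_ne_zero.mpr hi)
  have hcoeff := coeff_pderiv (i := i) p (m - Finsupp.single i 1)
  rw [hpi, coeff_zero, tsub_add_cancel_of_le hle] at hcoeff
  exact mem_support_iff.mp hm (by simpa [Nat.cast_add_one_ne_zero] using hcoeff.symm)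

end PDeriv

section Count

variable (σ R) [CommRing R] [Nontrivial R]

theorem finrank_restrictTotalDegree [Fintype σ] [DecidableEq σ] (s : ℕ) :
    finrank R (restrictTotalDegree σ R s) =
      ∑ k ∈ range (s + 1), (Fintype.card σ + k - 1).choose k := by
  have hset : {m : σ →₀ ℕ | (m.sum fun _ e => e) ≤ s} =
      ↑((range (s + 1)).biUnion fun k => (univ : Finset σ).finsuppAntidiag k) := by
    ext m
    simp [mem_finsuppAntidiag, Finsupp.sum_fintype]
  have hdisj : (range (s + 1) : Set ℕ).PairwiseDisjoint
      fun k => (univ : Finset σ).finsuppAntidiag k := by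
    intro k _ l _ hkl
    exact Finset.disjoint_left.mpr fun m hk hl =>
      hkl ((mem_finsuppAntidiag.mp hk).1.symm.trans (mem_finsuppAntidiag.mp hl).1)
  rw [restrictTotalDegree, finrank_eq_nat_card_basis (basisRestrictSupport R _), hset,
    Nat.card_coe_set_eq, Set.ncard_coe_finset, card_biUnion hdisj]
  simp [card_finsuppAntidiag_nat_eq_choose]

theorem two_mul_finrank_restrictTotalDegree_fin_two (s : ℕ) :
    2 * finrank R (restrictTotalDegree (Fin 2) R s) = (s + 1) * (s + 2) := by
  have hchoose (k : ℕ) : (2 + k - 1).choose k = k + 1 := by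
    rw [show 2 + k - 1 = k + 1 by omega, Nat.choose_succ_self_right]
  rw [finrank_restrictTotalDegree, Fintype.card_fin]
  simp only [hchoose]
  induction s with
  | zero => simp
  | succ s ih => rw [sum_range_succ, mul_add, ih]; ring

end Count

section Field

variable [Field K]

theorem exists_totalDegree_le_one_eval_eq_zero_eval_ne_zero {x y : σ → K} (hxy : x ≠ y) :
    ∃ q : MvPolynomial σ K, q.totalDegree ≤ 1 ∧ eval x q = 0 ∧ eval y q ≠ 0 := by
  obtain ⟨i, hi⟩ := Function.ne_iff.mp hxy
  refine ⟨X i - C (x i), ?_, by simp, by simpa [sub_eq_zero] using hi.symm⟩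
  exact (totalDegree_sub _ _).trans (by simp [totalDegree_X])

theorem exists_totalDegree_le_eval_ne_zero_eval_eq_zero (T : Finset (σ → K)) {x : σ → K}
    (hx : x ∈ T) : ∃ q : MvPolynomial σ K, q.totalDegree ≤ #T - 1 ∧ eval x q ≠ 0 ∧
      ∀ y ∈ T, y ≠ x → eval y q = 0 := by
  classical
  choose q hq_deg hq_zero hq_ne using fun y : {y // y ∈ T.erase x} =>
    exists_totalDegree_le_one_eval_eq_zero_eval_ne_zero (mem_erase.mp y.2).1
  refine ⟨∏ y ∈ (T.erase x).attach, q y, ?_, ?_, fun y hy hyx => ?_⟩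
  · calc (∏ y ∈ (T.erase x).attach, q y).totalDegree
        ≤ ∑ y ∈ (T.erase x).attach, (q y).totalDegree := totalDegree_finsetProd _ _
      _ ≤ ∑ y ∈ (T.erase x).attach, 1 := sum_le_sum fun y _ => hq_deg y
      _ = #T - 1 := by simp [card_erase_of_mem hx]
  · simpa [map_prod, prod_ne_zero_iff] using fun y hy => hq_ne ⟨y, hy⟩
  · rw [map_prod]
    exact prod_eq_zero (mem_attach _ ⟨y, mem_erase.mpr ⟨hyx, hy⟩⟩) (hq_zero _)

variable (K) in
noncomputable def evalOn (T : Finset (σ → K)) : MvPolynomial σ K →ₗ[K] T → K :=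
  LinearMap.pi fun x => (aeval (x : σ → K)).toLinearMap

theorem evalOn_apply (T : Finset (σ → K)) (p : MvPolynomial σ K) (x : T) :
    evalOn K T p x = eval (x : σ → K) p :=
  rfl

theorem map_evalOn_restrictTotalDegree {T : Finset (σ → K)} {s : ℕ} (hT : #T ≤ s + 1) :
    (restrictTotalDegree σ K s).map (evalOn K T) = ⊤ := by
  classical
  refine eq_top_iff.mpr fun v _ => ?_
  rw [pi_eq_sum_univ v]
  refine Submodule.sum_mem _ fun x _ => Submodule.smul_mem _ _ ?_
  obtain ⟨q, hq_deg, hq_ne, hq_zero⟩ := exists_totalDegree_le_eval_ne_zero_eval_eq_zero T x.2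
  have hq : q ∈ restrictTotalDegree σ K s := (mem_restrictTotalDegree _ _ _).mpr (by omega)
  refine ⟨(eval (x : σ → K) q)⁻¹ • q, Submodule.smul_mem _ _ hq, ?_⟩
  ext y
  rw [map_smul, Pi.smul_apply, evalOn_apply, smul_eq_mul]
  by_cases hxy : x = y
  · subst hxy; simp [hq_ne]
  · rw [hq_zero y y.2 (fun h => hxy (Subtype.ext h.symm)), mul_zero, if_neg hxy]

theorem map_mulLeft_le_ker_evalOn {f : MvPolynomial σ K} {T : Finset (σ → K)}
    (hf : ∀ x ∈ T, eval x f = 0) (W : Submodule K (MvPolynomial σ K)) :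
    W.map (LinearMap.mulLeft K f) ≤ LinearMap.ker (evalOn K T) := by
  rintro _ ⟨a, -, rfl⟩
  ext x
  simp [evalOn_apply, hf x x.2]

theorem finrank_map_mulLeft {f : MvPolynomial σ K} (hf : f ≠ 0)
    (W : Submodule K (MvPolynomial σ K)) :
    finrank K (W.map (LinearMap.mulLeft K f)) = finrank K W :=
  (Submodule.equivMapOfInjective _ (mul_right_injective₀ hf) W).finrank_eq.symm

end Field

theorem map_mulLeft_restrictTotalDegree_le [CommSemiring R] (f : MvPolynomial σ R) {k s : ℕ}
    (hs : f.totalDegree + k ≤ s) :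
    (restrictTotalDegree σ R k).map (LinearMap.mulLeft R f) ≤ restrictTotalDegree σ R s := by
  rintro _ ⟨a, ha, rfl⟩
  rw [SetLike.mem_coe, mem_restrictTotalDegree] at ha
  exact (mem_restrictTotalDegree _ _ _).mpr ((totalDegree_mul f a).trans (by omega))

theorem map_mulLeft_inf_map_mulLeft_le [CommRing R] [IsDomain R] {f h : MvPolynomial σ R}
    (hf : Prime f) (hfh : ¬f ∣ h) (k l : ℕ) :
    (restrictTotalDegree σ R l).map (LinearMap.mulLeft R f) ⊓
        (restrictTotalDegree σ R (f.totalDegree + k)).map (LinearMap.mulLeft R h) ≤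
      (restrictTotalDegree σ R k).map (LinearMap.mulLeft R (f * h)) := by
  rintro x ⟨⟨a, -, rfl⟩, ⟨b, hb, hab⟩⟩
  simp only [LinearMap.mulLeft_apply] at hab
  obtain ⟨c, rfl⟩ : f ∣ b := (hf.dvd_or_dvd ⟨a, hab⟩).resolve_left hfh
  refine ⟨c, ?_, by simp only [LinearMap.mulLeft_apply, ← hab]; ring⟩
  rw [SetLike.mem_coe, mem_restrictTotalDegree] at hb ⊢
  rcases eq_or_ne c 0 with rfl | hc
  · simp
  · rw [totalDegree_mul_of_isDomain hf.ne_zero hc] at hb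
    omega

theorem card_le_totalDegree_mul_totalDegree [Field K] {f h : MvPolynomial (Fin 2) K}
    (hf : Prime f) (hfh : ¬f ∣ h) {T : Finset (Fin 2 → K)}
    (hT : ∀ x ∈ T, eval x f = 0 ∧ eval x h = 0) :
    #T ≤ f.totalDegree * h.totalDegree := by
  set m := f.totalDegree
  set n := h.totalDegree
  set N := #T
  let V := restrictTotalDegree (Fin 2) K
  let A := (V (n + N)).map (LinearMap.mulLeft K f)
  let B := (V (m + N)).map (LinearMap.mulLeft K h)
  have hh : h ≠ 0 := by rintro rfl; exact hfh (dvd_zero f)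
  have hA : finrank K A = finrank K (V (n + N)) := finrank_map_mulLeft hf.ne_zero _
  have hB : finrank K B = finrank K (V (m + N)) := finrank_map_mulLeft hh _
  have hAB : finrank K ↥(A ⊓ B) ≤ finrank K (V N) :=
    (Submodule.finrank_mono (map_mulLeft_inf_map_mulLeft_le hf hfh N (n + N))).trans
      (finrank_map_mulLeft (mul_ne_zero hf.ne_zero hh) _).le
  have hsup : finrank K ↥(A ⊔ B) + N ≤ finrank K (V (m + n + N)) := by
    have := Submodule.finrank_add_finrank_le_of_map_eq_top (evalOn K T)
      (map_evalOn_restrictTotalDegree (s := m + n + N) (by omega))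
      (sup_le (map_mulLeft_restrictTotalDegree_le f (k := n + N) (by omega))
        (map_mulLeft_restrictTotalDegree_le h (k := m + N) (by omega)))
      (sup_le (map_mulLeft_le_ker_evalOn (fun x hx => (hT x hx).1) _)
        (map_mulLeft_le_ker_evalOn (fun x hx => (hT x hx).2) _))
    rwa [finrank_fintype_fun_eq_card, Fintype.card_coe] at this
  have hdim := Submodule.finrank_sup_add_finrank_inf_eq A B
  have h1 := two_mul_finrank_restrictTotalDegree_fin_two K (m + n + N)
  have h2 := two_mul_finrank_restrictTotalDegree_fin_two K (n + N)
  have h3 := two_mul_finrank_restrictTotalDegree_fin_two K (m + N)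
  have h4 := two_mul_finrank_restrictTotalDegree_fin_two K N
  nlinarith

end MvPolynomial

theorem Set.finite_and_ncard_le_of_forall_finset_card_le {α : Type*} {S : Set α} {B : ℕ}
    (hS : ∀ T : Finset α, ↑T ⊆ S → #T ≤ B) : S.Finite ∧ S.ncard ≤ B := by
  have hfin : S.Finite := by
    by_contra hinf
    obtain ⟨T, hTS, hT⟩ := Set.Infinite.exists_subset_card_eq hinf (B + 1)
    have := hS T hTS
    omega
  refine ⟨hfin, ?_⟩
  rw [Set.ncard_eq_toFinset_card S hfin]
  exact hS _ (by simp)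

/-- **Corollary 7.** If `g ∈ ℂ[X,Y]` is irreducible of total degree `d ≥ 1`, it has at
most `d(d-1)` singular zeros in `ℂ²`, i.e. common zeros of `g`, `∂g/∂X` and `∂g/∂Y`. -/
theorem irreducible_singular_zeros_finite_card_le
    (g : MvPolynomial (Fin 2) ℂ) (hirr : Irreducible g)
    (d : ℕ) (hd : g.totalDegree = d) (hd1 : 1 ≤ d) :
    {p : ℂ × ℂ | eval ![p.1, p.2] g = 0 ∧
        eval ![p.1, p.2] (pderiv (0 : Fin 2) g) = 0 ∧
        eval ![p.1, p.2] (pderiv (1 : Fin 2) g) = 0}.Finite ∧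
      {p : ℂ × ℂ | eval ![p.1, p.2] g = 0 ∧
        eval ![p.1, p.2] (pderiv (0 : Fin 2) g) = 0 ∧
        eval ![p.1, p.2] (pderiv (1 : Fin 2) g) = 0}.ncard ≤ d * (d - 1) := by
  subst hd
  obtain ⟨i, hi⟩ := exists_pderiv_ne_zero (p := g) (by omega)
  have hlt := totalDegree_pderiv_lt hi
  have hndvd : ¬g ∣ pderiv i g := fun hdvd =>
    (totalDegree_le_of_dvd_of_isDomain hdvd hi).not_gt hlt
  refine Set.finite_and_ncard_le_of_forall_finset_card_le fun T hT => ?_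
  have hinj : Function.Injective fun p : ℂ × ℂ => ![p.1, p.2] :=
    (finTwoArrowEquiv ℂ).symm.injective
  calc #T = #(T.image fun p : ℂ × ℂ => ![p.1, p.2]) := (card_image_of_injective _ hinj).symm
    _ ≤ g.totalDegree * (pderiv i g).totalDegree := by
        refine card_le_totalDegree_mul_totalDegree hirr.prime hndvd ?_
        simp only [mem_image]
        rintro _ ⟨p, hp, rfl⟩
        obtain ⟨hg, h0, h1⟩ := hT hp
        fin_cases i
        exacts [⟨hg, h0⟩, ⟨hg, h1⟩]
    _ ≤ g.totalDegree * (g.totalDegree - 1) := Nat.mul_le_mul_left _ (by omega)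
end

section
/- Let F ∈ ℝ[X,Y] be a bivariate polynomial of total degree d ≥ 1 which is irreducible in ℝ[X,Y] and whose partial derivative F_Y = ∂F/∂Y is not the zero polynomial. Then the set {(x,y) ∈ ℝ² : F(x,y) = 0 and Res(F, F_Y)(x) = 0} is finite with at most 2d³ − d² elements, where Res(F, F_Y) ∈ ℝ[X] is the resultant of F and F_Y viewed as polynomials in Y over ℝ[X]. -/
open Polynomial
open scoped Polynomial.Bivariate

/-- The Sylvester matrix of `A` and `B` (viewed as polynomials of degrees `m` and `n`):
the `(m+n) × (m+n)` matrix whose first `n` rows contain the coefficients of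
`Y^{n-1}A, …, YA, A` and whose last `m` rows contain those of `Y^{m-1}B, …, YB, B`,
the coefficient of `Y^i` occurring in (1-indexed) column `m + n - i`. -/
noncomputable def sylvesterMatrix {R : Type*} [CommRing R] (A B : R[X]) (m n : ℕ) :
    Matrix (Fin (m + n)) (Fin (m + n)) R :=
  Matrix.of fun i j =>
    if (i : ℕ) < n then (X ^ (n - 1 - (i : ℕ)) * A).coeff (m + n - 1 - (j : ℕ))
    else (X ^ (m + n - 1 - (i : ℕ)) * B).coeff (m + n - 1 - (j : ℕ))

/-- The resultant of two polynomials, as the determinant of their Sylvester matrix. -/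
noncomputable def resultant {R : Type*} [CommRing R] (A B : R[X]) : R :=
  (sylvesterMatrix A B A.natDegree B.natDegree).det

/-- The total degree of a bivariate polynomial `F ∈ R[X][Y]`. -/
noncomputable def totalDeg {R : Type*} [CommRing R] (F : R[X][Y]) : ℕ :=
  F.support.sup fun i => i + (F.coeff i).natDegree

/-!
The resultant `Res(F, F_Y)` is nonzero: by Gauss's lemma `F` stays irreducible over `ℝ(X)`, hence
coprime to `F_Y`, which is nonzero of smaller `Y`-degree. Its Sylvester matrix has size
`deg_Y F + deg_Y F_Y ≤ 2d - 1` and entries of `X`-degree at most `d`, so `Res(F, F_Y)` has at most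
`(2d - 1)d` roots `x`. Above each of them `F(x, ·)` is a nonzero polynomial (`F` is primitive) of
degree at most `d`, so it has at most `d` roots.
-/

open scoped Matrix

section

variable {R : Type*} [CommRing R]

theorem sylvesterMatrix_eq_submatrix_transpose_sylvester {A B : R[X]} {m n : ℕ}
    (hA : A.natDegree ≤ m) (hB : B.natDegree ≤ n) :
    sylvesterMatrix A B m n = (sylvester A B m n)ᵀ.submatrix Fin.rev Fin.rev := by
  ext i j
  have hj := j.isLt
  obtain ⟨k, rfl⟩ := Fin.rev_surjective i
  induction k using Fin.addCases with
  | left k =>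
    have hk : ¬ (m + n - (k + 1) < n) := by omega
    simp only [sylvesterMatrix, sylvester, Matrix.of_apply, Matrix.submatrix_apply,
      Matrix.transpose_apply, Fin.rev_rev, Fin.val_rev, Fin.val_castAdd, Fin.addCases_left, hk,
      if_false, coeff_X_pow_mul', Set.mem_Icc]
    split_ifs <;> first | rfl | omega | (congr 1; omega) |
      exact coeff_eq_zero_of_natDegree_lt (by omega)
  | right k =>
    have hk : m + n - (m + k + 1) < n := by omega
    simp only [sylvesterMatrix, sylvester, Matrix.of_apply, Matrix.submatrix_apply,
      Matrix.transpose_apply, Fin.rev_rev, Fin.val_rev, Fin.val_natAdd, Fin.addCases_right, hk,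
      if_true, coeff_X_pow_mul', Set.mem_Icc]
    split_ifs <;> first | rfl | omega | (congr 1; omega) |
      exact coeff_eq_zero_of_natDegree_lt (by omega)

theorem resultant_eq_polynomial_resultant (A B : R[X]) :
    _root_.resultant A B = A.resultant B := by
  rw [_root_.resultant, sylvesterMatrix_eq_submatrix_transpose_sylvester le_rfl le_rfl]
  exact (Matrix.det_submatrix_equiv_self Fin.revPerm _).trans (Matrix.det_transpose _)

theorem natDegree_le_totalDeg (F : R[X][Y]) : F.natDegree ≤ totalDeg F := by
  rcases eq_or_ne F 0 with rfl | hF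
  · simp
  exact (Nat.le_add_right _ _).trans
    (Finset.le_sup (f := fun i => i + (F.coeff i).natDegree) (natDegree_mem_support_of_nonzero hF))

theorem natDegree_coeff_le_totalDeg (F : R[X][Y]) (i : ℕ) :
    (F.coeff i).natDegree ≤ totalDeg F := by
  rcases eq_or_ne (F.coeff i) 0 with h | h
  · simp [h]
  exact (Nat.le_add_left _ _).trans
    (Finset.le_sup (f := fun i => i + (F.coeff i).natDegree) (mem_support_iff.mpr h))

end

theorem Matrix.natDegree_det_le {R n : Type*} [CommRing R] [Fintype n] [DecidableEq n]
    (M : Matrix n n R[X]) {e : ℕ} (hM : ∀ i j, (M i j).natDegree ≤ e) :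
    M.det.natDegree ≤ Fintype.card n * e := by
  rw [Matrix.det_apply]
  refine natDegree_sum_le_of_forall_le _ _ fun σ _ => (natDegree_smul_le _ _).trans ?_
  refine (natDegree_prod_le _ _).trans ?_
  exact (Finset.sum_le_card_nsmul _ _ e fun i _ => hM (σ i) i).trans_eq
    (by rw [smul_eq_mul, Finset.card_univ])

namespace Polynomial

theorem natDegree_resultant_le {R : Type*} [CommRing R] {f g : R[X][Y]} {m n e : ℕ}
    (hf : ∀ i, (f.coeff i).natDegree ≤ e) (hg : ∀ i, (g.coeff i).natDegree ≤ e) :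
    (f.resultant g m n).natDegree ≤ (m + n) * e := by
  refine (Matrix.natDegree_det_le _ fun i j => ?_).trans (by rw [Fintype.card_fin])
  induction j using Fin.addCases <;>
    simp only [sylvester, Matrix.of_apply, Fin.addCases_left, Fin.addCases_right] <;>
    split_ifs <;> simp [hf, hg]

theorem natDegree_coeff_derivative_le {R : Type*} [CommRing R] (F : R[X][Y]) (i : ℕ) :
    ((derivative F).coeff i).natDegree ≤ (F.coeff (i + 1)).natDegree := by
  rw [coeff_derivative, ← Nat.cast_add_one]
  exact natDegree_mul_le.trans (by rw [natDegree_natCast, add_zero])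

theorem resultant_derivative_ne_zero {R : Type*} [CommRing R] [IsDomain R] [IsGCDMonoid R]
    {F : R[X]} (hF : Irreducible F) (hF' : derivative F ≠ 0) :
    F.resultant (derivative F) ≠ 0 := by
  set φ := algebraMap R (FractionRing R)
  have hφ : Function.Injective φ := IsFractionRing.injective R (FractionRing R)
  have hprim := hF.isPrimitive (mt derivative_of_natDegree_zero hF')
  have hirr : Irreducible (F.map φ) := hprim.irreducible_iff_irreducible_map_fraction_map.mp hF
  have hF'φ : derivative (F.map φ) ≠ 0 := by
    rwa [derivative_map, Ne, Polynomial.map_eq_zero_iff hφ]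
  have hcop : IsCoprime (F.map φ) (derivative (F.map φ)) := by
    refine hirr.coprime_iff_not_dvd.mpr fun hdvd => ?_
    have hle := natDegree_le_of_dvd hdvd hF'φ
    have hlt := natDegree_derivative_lt (mt derivative_of_natDegree_zero hF'φ)
    omega
  intro h0
  have hmap := resultant_map_map F (derivative F) F.natDegree (derivative F).natDegree φ
  rw [h0, map_zero, ← natDegree_map_eq_of_injective hφ, ← natDegree_map_eq_of_injective hφ,
    ← derivative_map, resultant_eq_zero_iff] at hmap
  exact hmap.2 hcop

theorem IsPrimitive.map_evalRingHom_ne_zero {R : Type*} [CommRing R] [Nontrivial R]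
    {F : R[X][Y]} (hF : F.IsPrimitive) (x : R) : F.map (evalRingHom x) ≠ 0 := by
  intro h0
  have hdvd : C (X - C x) ∣ F := (C_dvd_iff_dvd_coeff _ _).mpr fun i => by
    simpa [dvd_iff_isRoot] using congr_arg (coeff · i) h0
  exact not_isUnit_X_sub_C x (hF _ hdvd)

theorem finite_and_ncard_le_of_fibres {K : Type*} [CommRing K] [IsDomain K]
    {r : K[X]} (hr : r ≠ 0) {g : K → K[X]} (hg : ∀ x, g x ≠ 0) {e : ℕ}
    (hge : ∀ x, (g x).natDegree ≤ e) :
    {p : K × K | (g p.1).eval p.2 = 0 ∧ r.eval p.1 = 0}.Finite ∧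
      {p : K × K | (g p.1).eval p.2 = 0 ∧ r.eval p.1 = 0}.ncard ≤ r.natDegree * e := by
  classical
  set t := r.roots.toFinset.biUnion fun x => (g x).roots.toFinset.image (x, ·)
  have hsub : {p : K × K | (g p.1).eval p.2 = 0 ∧ r.eval p.1 = 0} ⊆ t := by
    rintro ⟨x, y⟩ ⟨hy, hx⟩
    simp only [t, Finset.coe_biUnion, Finset.coe_image, Set.mem_iUnion, Set.mem_image,
      Finset.mem_coe, Multiset.mem_toFinset, mem_roots', IsRoot.def]
    exact ⟨x, ⟨hr, hx⟩, y, ⟨hg x, hy⟩, rfl⟩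
  have hcard : t.card ≤ r.natDegree * e := by
    refine (Finset.card_biUnion_le_card_mul _ _ e fun x _ => ?_).trans
      (Nat.mul_le_mul_right _ ((Multiset.toFinset_card_le _).trans (card_roots' r)))
    exact Finset.card_image_le.trans
      ((Multiset.toFinset_card_le _).trans ((card_roots' _).trans (hge x)))
  exact ⟨t.finite_toSet.subset hsub,
    (Set.ncard_le_ncard hsub t.finite_toSet).trans_eq (Set.ncard_coe_finset t) |>.trans hcard⟩

end Polynomial

theorem card_zeros_on_resultant_lines_le_general
    (F : ℝ[X][Y]) (hirr : Irreducible F)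
    (d : ℕ) (hd : totalDeg F = d)
    (hFY : Polynomial.derivative F ≠ 0) :
    {p : ℝ × ℝ | F.evalEval p.1 p.2 = 0 ∧
        (_root_.resultant F (Polynomial.derivative F)).eval p.1 = 0}.Finite ∧
      {p : ℝ × ℝ | F.evalEval p.1 p.2 = 0 ∧
        (_root_.resultant F (Polynomial.derivative F)).eval p.1 = 0}.ncard ≤
        2 * d ^ 3 - d ^ 2 := by
  have hdegY : F.natDegree ≤ d := hd ▸ natDegree_le_totalDeg F
  have hdegX : ∀ i, (F.coeff i).natDegree ≤ d := hd ▸ natDegree_coeff_le_totalDeg F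
  have hF : F.natDegree ≠ 0 := mt derivative_of_natDegree_zero hFY
  have hF' : (derivative F).natDegree < F.natDegree := natDegree_derivative_lt hF
  have hdegX' i : ((derivative F).coeff i).natDegree ≤ d :=
    (natDegree_coeff_derivative_le F i).trans (hdegX _)
  have hres : (F.resultant (derivative F)).natDegree ≤ (2 * d - 1) * d :=
    (natDegree_resultant_le hdegX hdegX').trans (Nat.mul_le_mul_right _ (by omega))
  have key := finite_and_ncard_le_of_fibres (resultant_derivative_ne_zero hirr hFY)
    (hirr.isPrimitive hF).map_evalRingHom_ne_zero fun x => natDegree_map_le.trans hdegY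
  simp only [map_evalRingHom_eval] at key
  rw [resultant_eq_polynomial_resultant]
  refine ⟨key.1, key.2.trans ?_⟩
  calc _ ≤ (2 * d - 1) * d * d := Nat.mul_le_mul_right _ hres
    _ = 2 * d ^ 3 - d ^ 2 := by rw [Nat.sub_mul, Nat.sub_mul]; ring_nf

/-- **Lemma (roots on the critical lines).** Let `F ∈ ℝ[X][Y] ≅ ℝ[X,Y]` be irreducible
of total degree `d ≥ 1` with `F_Y = ∂F/∂Y ≠ 0`.  Then the set of points `(x, y) ∈ ℝ²`
with `F(x,y) = 0` and `Res(F, F_Y)(x) = 0` is finite, of cardinality at most `2d³ - d²`. -/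
theorem card_zeros_on_resultant_lines_le
    (F : ℝ[X][Y]) (hirr : Irreducible F)
    (d : ℕ) (hd : totalDeg F = d) (hd1 : 1 ≤ d)
    (hFY : Polynomial.derivative F ≠ 0) :
    {p : ℝ × ℝ | F.evalEval p.1 p.2 = 0 ∧
        (_root_.resultant F (Polynomial.derivative F)).eval p.1 = 0}.Finite ∧
      {p : ℝ × ℝ | F.evalEval p.1 p.2 = 0 ∧
        (_root_.resultant F (Polynomial.derivative F)).eval p.1 = 0}.ncard ≤
        2 * d ^ 3 - d ^ 2 :=
  card_zeros_on_resultant_lines_le_general F hirr d hd hFY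
end

section
/- Let F ∈ ℝ[X,Y] be a nonzero bivariate polynomial of total degree d ≥ 1 with ∂F/∂Y = 0 (so F depends only on the variable X), and let G ∈ ℝ[X,Y] be a bivariate t-sparse polynomial (t ≥ 1). If the system F(X,Y) = 0, G(X,Y) = 0 has finitely many real solutions, then it has at most d(2t − 1) real solutions. -/
open MvPolynomial

/-!
Since `∂F/∂Y = 0`, the variable `Y` does not occur in `F`, so `F(x, y) = f(x)` for a univariate
`f ≠ 0` of degree at most `d`, and every solution lies on one of the at most `d` vertical lines
`x = x₀` with `f(x₀) = 0`. On such a line `G` restricts to a univariate polynomial with at most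
`t` monomials, nonzero because the solution set is finite. A real univariate polynomial with `t`
monomials has at most `2t - 1` distinct real roots: write it as `X ^ m * q` with `q(0) ≠ 0`; by
Rolle's theorem `q` has at most one root more than `q'`, which has one monomial fewer, and `X ^ m`
adds only the root `0`.
-/

namespace Polynomial

open Finset

lemma card_support_derivative_le {R : Type*} [Semiring R] (p : R[X]) :
    #(derivative p).support ≤ #(p.support.erase 0) := by
  refine card_le_card_of_injOn (· + 1) (fun n hn => ?_) (add_left_injective 1).injOn
  rw [mem_coe, mem_support_iff, coeff_derivative] at hn
  exact mem_erase.mpr ⟨n.succ_ne_zero, mem_support_iff.mpr (left_ne_zero_of_mul hn)⟩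

lemma card_support_le_card_support_X_pow_mul {R : Type*} [Semiring R] (q : R[X]) (m : ℕ) :
    #q.support ≤ #(X ^ m * q).support := by
  refine card_le_card_of_injOn (· + m) (fun n hn => ?_) (add_left_injective m).injOn
  rw [mem_coe, mem_support_iff] at hn ⊢
  rwa [coeff_X_pow_mul]

lemma roots_toFinset_X_pow_mul_subset {R : Type*} [CommRing R] [IsDomain R] [DecidableEq R]
    (q : R[X]) (m : ℕ) : (X ^ m * q).roots.toFinset ⊆ insert 0 q.roots.toFinset := by
  rcases eq_or_ne q 0 with rfl | hq
  · simp
  intro x hx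
  rw [roots_mul (mul_ne_zero (pow_ne_zero m X_ne_zero) hq), roots_X_pow, Multiset.toFinset_add,
    mem_union] at hx
  rcases hx with hx | hx
  · have hx0 : x ∈ ({0} : Multiset R) := Multiset.mem_of_mem_nsmul (Multiset.mem_toFinset.mp hx)
    exact mem_insert.mpr (Or.inl (Multiset.mem_singleton.mp hx0))
  · exact mem_insert_of_mem hx

theorem card_roots_toFinset_le_two_mul_card_support_sub_one (p : ℝ[X]) :
    #p.roots.toFinset ≤ 2 * #p.support - 1 := by
  induction hn : #p.support using Nat.strong_induction_on generalizing p with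
  | _ n ih =>
  rcases eq_or_ne p 0 with rfl | hp
  · simp
  obtain ⟨q, hpq, hXq⟩ := p.exists_eq_pow_rootMultiplicity_mul_and_not_dvd hp 0
  rw [C_0, sub_zero] at hpq hXq
  have hq0 : 0 ∈ q.support := mem_support_iff.mpr fun h => hXq (X_dvd_iff.mpr h)
  have hsupp : #q.support ≤ n := by
    rw [← hn, hpq]; exact card_support_le_card_support_X_pow_mul q _
  have hroots : #p.roots.toFinset ≤ #q.roots.toFinset + 1 := by
    rw [hpq]; exact (card_le_card (roots_toFinset_X_pow_mul_subset q _)).trans (card_insert_le _ _)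
  rcases eq_or_ne (derivative q) 0 with hq' | hq'
  · have hq_roots : q.roots = 0 := by rw [eq_C_of_derivative_eq_zero hq', roots_C]
    have hn_pos : 0 < n := hn ▸ card_pos.mpr (support_nonempty.mpr hp)
    rw [hq_roots, Multiset.toFinset_zero, card_empty] at hroots
    omega
  · have hsupp' : #(derivative q).support < n := by
      have hle := card_support_derivative_le q
      rw [card_erase_of_mem hq0] at hle
      have hq_pos := card_pos.mpr ⟨0, hq0⟩
      omega
    have hsupp'_pos := card_pos.mpr (support_nonempty.mpr hq')
    have hroots' := ih _ hsupp' (derivative q) rfl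
    have hrolle := card_roots_toFinset_le_derivative q
    omega

end Polynomial

namespace MvPolynomial

variable {R σ : Type*} [CommSemiring R]

lemma notMem_vars_of_pderiv_eq_zero [NoZeroDivisors R] [CharZero R] {P : MvPolynomial σ R}
    {i : σ} (h : pderiv i P = 0) : i ∉ P.vars := by
  classical
  rw [mem_vars_iff_mem_support]
  rintro ⟨m, hm, hi⟩
  have hle : Finsupp.single i 1 ≤ m :=
    Finsupp.single_le_iff.mpr (Nat.one_le_iff_ne_zero.mpr (Finsupp.mem_support_iff.mp hi))
  have hcoeff := coeff_pderiv (i := i) P (m - Finsupp.single i 1)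
  rw [h, coeff_zero, tsub_add_cancel_of_le hle, eq_comm] at hcoeff
  exact mem_support_iff.mp hm
    ((mul_eq_zero.mp hcoeff).resolve_right (Nat.cast_add_one_ne_zero _))

lemma eval_update_of_notMem_vars [DecidableEq σ] {P : MvPolynomial σ R} {i : σ} (h : i ∉ P.vars)
    (a : σ → R) (y : R) : eval (Function.update a i y) P = eval a P :=
  hom_congr_vars (by ext; simp)
    (fun j hj _ => by simp [Function.update_of_ne (ne_of_mem_of_not_mem hj h)]) rfl

variable [DecidableEq σ]

noncomputable def specialize (i : σ) (a : σ → R) : MvPolynomial σ R →ₐ[R] Polynomial R :=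
  aeval (Function.update (fun j => Polynomial.C (a j)) i Polynomial.X)

lemma eval_specialize (P : MvPolynomial σ R) (i : σ) (a : σ → R) (y : R) :
    (specialize i a P).eval y = eval (Function.update a i y) P := by
  rw [specialize, aeval_def, polynomial_eval_eval₂]
  congr 1
  · ext; simp
  · funext j
    by_cases hj : j = i
    · subst hj; simp
    · simp [Function.update_of_ne hj]

lemma specialize_monomial (m : σ →₀ ℕ) (c : R) (i : σ) (a : σ → R) :
    specialize i a (monomial m c) =
      Polynomial.C (c * ∏ j ∈ (insert i m.support).erase i, a j ^ m j) * Polynomial.X ^ m i := by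
  set g := Function.update (fun j => Polynomial.C (a j)) i Polynomial.X
  have hprod : (m.prod fun j k => g j ^ k) =
      g i ^ m i * ∏ j ∈ (insert i m.support).erase i, g j ^ m j := by
    rw [Finset.mul_prod_erase _ (fun j => g j ^ m j) (Finset.mem_insert_self _ _), Finsupp.prod]
    exact Finset.prod_subset (Finset.subset_insert _ _)
      (fun j _ hj => by simp [Finsupp.notMem_support_iff.mp hj])
  have hother : ∀ j ∈ (insert i m.support).erase i, g j ^ m j = Polynomial.C (a j ^ m j) :=
    fun j hj => by simp [g, Function.update_of_ne (Finset.ne_of_mem_erase hj)]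
  rw [specialize, aeval_monomial, hprod, Finset.prod_congr rfl hother, ← map_prod]
  simp only [g, Function.update_self, Polynomial.algebraMap_eq, map_mul]
  ring

lemma support_specialize_subset (P : MvPolynomial σ R) (i : σ) (a : σ → R) :
    (specialize i a P).support ⊆ P.support.image (· i) := by
  intro n hn
  rw [P.as_sum, map_sum, Polynomial.mem_support_iff, Polynomial.finsetSum_coeff] at hn
  obtain ⟨m, hm, hne⟩ := Finset.exists_ne_zero_of_sum_ne_zero hn
  rw [specialize_monomial, Polynomial.coeff_C_mul_X_pow] at hne
  exact Finset.mem_image.mpr ⟨m, hm, (not_not.mp fun h => hne (if_neg h)).symm⟩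

lemma card_support_specialize_le (P : MvPolynomial σ R) (i : σ) (a : σ → R) :
    (specialize i a P).support.card ≤ P.support.card :=
  (Finset.card_le_card (support_specialize_subset P i a)).trans Finset.card_image_le

lemma natDegree_specialize_le (P : MvPolynomial σ R) (i : σ) (a : σ → R) :
    (specialize i a P).natDegree ≤ P.totalDegree := by
  by_cases h0 : specialize i a P = 0
  · simp [h0]
  obtain ⟨m, hm, hmi⟩ := Finset.mem_image.mp
    (support_specialize_subset P i a (Polynomial.natDegree_mem_support_of_nonzero h0))
  exact hmi ▸ (monomial_le_degreeOf i hm).trans (degreeOf_le_totalDegree P i)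

lemma eval_eq_eval_specialize_zero_of_pderiv_one_eq_zero [NoZeroDivisors R] [CharZero R]
    {F : MvPolynomial (Fin 2) R} (h : pderiv 1 F = 0) (x y : R) :
    eval ![x, y] F = (specialize 0 0 F).eval x := by
  have hxy : ![x, y] = Function.update (Function.update (0 : Fin 2 → R) 0 x) 1 y := by
    ext j; fin_cases j <;> simp
  rw [eval_specialize, hxy, eval_update_of_notMem_vars (notMem_vars_of_pderiv_eq_zero h)]

lemma eval_eq_eval_specialize_one (G : MvPolynomial (Fin 2) R) (x y : R) :
    eval ![x, y] G = (specialize 1 ![x, 0] G).eval y := by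
  have hxy : ![x, y] = Function.update ![x, 0] 1 y := by
    ext j; fin_cases j <;> simp
  rw [eval_specialize, hxy]

end MvPolynomial

lemma Set.ncard_le_card_mul_of_mem_fibers {α β : Type*} [DecidableEq α] [DecidableEq β]
    {S : Set (α × β)} (A : Finset α) (B : α → Finset β) (k : ℕ)
    (hS : ∀ p ∈ S, p.1 ∈ A ∧ p.2 ∈ B p.1) (hB : ∀ a ∈ A, (B a).card ≤ k) :
    S.ncard ≤ A.card * k := by
  have hsub : S ⊆ ↑(A.biUnion fun a => (B a).image (Prod.mk a)) := fun p hp =>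
    Finset.mem_biUnion.mpr ⟨p.1, (hS p hp).1, Finset.mem_image.mpr ⟨p.2, (hS p hp).2, rfl⟩⟩
  calc S.ncard ≤ (A.biUnion fun a => (B a).image (Prod.mk a)).card :=
        (Set.ncard_le_ncard hsub (Finset.finite_toSet _)).trans (Set.ncard_coe_finset _).le
    _ ≤ A.card * k := Finset.card_biUnion_le_card_mul _ _ _ fun a ha =>
        Finset.card_image_le.trans (hB a ha)

theorem card_solutions_le_of_pderivY_eq_zero_general
    (F G : MvPolynomial (Fin 2) ℝ) (hF : F ≠ 0)
    (d : ℕ) (hd : F.totalDegree = d)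
    (hFY : pderiv (1 : Fin 2) F = 0)
    (t : ℕ) (hG : G.support.card ≤ t)
    (hfin : {p : ℝ × ℝ | eval ![p.1, p.2] F = 0 ∧ eval ![p.1, p.2] G = 0}.Finite) :
    {p : ℝ × ℝ | eval ![p.1, p.2] F = 0 ∧ eval ![p.1, p.2] G = 0}.ncard ≤
      d * (2 * t - 1) := by
  classical
  set f := specialize 0 0 F
  set g : ℝ → Polynomial ℝ := fun x => specialize 1 ![x, 0] G
  have hFf (x y : ℝ) : eval ![x, y] F = f.eval x :=
    eval_eq_eval_specialize_zero_of_pderiv_one_eq_zero hFY x y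
  have hGg (x y : ℝ) : eval ![x, y] G = (g x).eval y := eval_eq_eval_specialize_one G x y
  have hf : f ≠ 0 := fun h => hF <| MvPolynomial.funext fun v => by
    have hv : v = ![v 0, v 1] := by ext j; fin_cases j <;> rfl
    rw [hv, hFf, h, Polynomial.eval_zero, map_zero]
  have hg (x : ℝ) (hx : f.IsRoot x) : g x ≠ 0 := fun h => hfin.not_infinite <|
    Set.infinite_of_injective_forall_mem (Prod.mk_right_injective x) fun y =>
      ⟨(hFf x y).trans hx, (hGg x y).trans (by rw [h, Polynomial.eval_zero])⟩
  have hroots (x y : ℝ) (hFxy : eval ![x, y] F = 0) (hGxy : eval ![x, y] G = 0) :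
      x ∈ f.roots.toFinset ∧ y ∈ (g x).roots.toFinset := by
    have hx : f.IsRoot x := by rwa [Polynomial.IsRoot, ← hFf x y]
    have hy : (g x).IsRoot y := by rwa [Polynomial.IsRoot, ← hGg x y]
    exact ⟨Multiset.mem_toFinset.mpr ((Polynomial.mem_roots hf).mpr hx),
      Multiset.mem_toFinset.mpr ((Polynomial.mem_roots (hg x hx)).mpr hy)⟩
  have hfiber (x : ℝ) : (g x).roots.toFinset.card ≤ 2 * t - 1 :=
    (Polynomial.card_roots_toFinset_le_two_mul_card_support_sub_one (g x)).trans <|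
      Nat.sub_le_sub_right (Nat.mul_le_mul_left 2 ((card_support_specialize_le G 1 _).trans hG)) 1
  have hbase : f.roots.toFinset.card ≤ d := (Multiset.toFinset_card_le _).trans <|
    (Polynomial.card_roots' f).trans (hd ▸ natDegree_specialize_le F 0 0)
  calc _ ≤ f.roots.toFinset.card * (2 * t - 1) :=
        Set.ncard_le_card_mul_of_mem_fibers _ _ _ (fun p hp => hroots p.1 p.2 hp.1 hp.2)
          fun x _ => hfiber x
    _ ≤ d * (2 * t - 1) := Nat.mul_le_mul_right _ hbase

/-- **Base case 2 of Proposition 11.** If `F ∈ ℝ[X,Y]` is nonzero of total degree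
`d ≥ 1` with `∂F/∂Y = 0` (so `F` depends only on `X`), `G` is `t`-sparse (`t ≥ 1`),
and the system `F = G = 0` has finitely many real solutions, then it has at most
`d·(2t - 1)` solutions. -/
theorem card_solutions_le_of_pderivY_eq_zero
    (F G : MvPolynomial (Fin 2) ℝ) (hF : F ≠ 0)
    (d : ℕ) (hd : F.totalDegree = d) (hd1 : 1 ≤ d)
    (hFY : pderiv (1 : Fin 2) F = 0)
    (t : ℕ) (ht : 1 ≤ t) (hG : G.support.card ≤ t)
    (hfin : {p : ℝ × ℝ | eval ![p.1, p.2] F = 0 ∧ eval ![p.1, p.2] G = 0}.Finite) :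
    {p : ℝ × ℝ | eval ![p.1, p.2] F = 0 ∧ eval ![p.1, p.2] G = 0}.ncard ≤
      d * (2 * t - 1) :=
  card_solutions_le_of_pderivY_eq_zero_general F G hF d hd hFY t hG hfin
end
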